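/- arXiv:0902.4344 — 7 statements merged into one kernel-verified Lean document; each statement's English description precedes it below -/
import Mathlib

section
/- Let n, p ≥ 1, let X be a real n×p matrix, let A be a symmetric positive definite real p×p matrix, let ρ > 0, let α ∈ ℝ^p and d ∈ ℝ^n, and set M := (1/(n·p))·Xᵀ·X + ρ·A and â := (1/n)·M⁻¹·Xᵀ·((1/p)·X·α + d). Then (1/(n·p²))·‖X·(â − α)‖² ≤ 2·(ρ/p)·αᵀ·A·α + (4/n)·‖d‖², where ‖·‖ is the Euclidean norm. -/
/-!
With `u = â - α`, the normal equations give `M u = (1/n) Xᵀ d - ρ A α`. Pairing with `u` yields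
`(1/(np)) ‖X u‖² + ρ uᵀ A u = (1/n) ⟨X u, d⟩ - ρ uᵀ A α`, and the two cross terms on the right are
absorbed into the left by Young's inequality, for the Euclidean inner product and for the
semi-inner product `A`.
-/

open Matrix

namespace Matrix

variable {m k : Type*} [Fintype m] [Fintype k]

theorem PosSemidef.two_mul_dotProduct_mulVec_le {A : Matrix k k ℝ} (hA : A.PosSemidef)
    (u v : k → ℝ) : 2 * (u ⬝ᵥ A *ᵥ v) ≤ u ⬝ᵥ A *ᵥ u + v ⬝ᵥ A *ᵥ v := by
  have hsymm : v ⬝ᵥ A *ᵥ u = u ⬝ᵥ A *ᵥ v := by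
    rw [← dotProduct_transpose_mulVec, ← conjTranspose_eq_transpose_of_trivial, hA.isHermitian]
  have hnonneg : 0 ≤ (u - v) ⬝ᵥ A *ᵥ (u - v) := by
    simpa using hA.dotProduct_mulVec_nonneg (u - v)
  simp only [mulVec_sub, dotProduct_sub, sub_dotProduct] at hnonneg
  linarith

theorem two_mul_dotProduct_le (x y : m → ℝ) : 2 * (x ⬝ᵥ y) ≤ x ⬝ᵥ x + y ⬝ᵥ y := by
  classical
  simpa using PosSemidef.one.two_mul_dotProduct_mulVec_le x y

theorem PosDef.smul_transpose_mul_self_add_smul (X : Matrix m k ℝ) {A : Matrix k k ℝ}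
    (hA : A.PosDef) {c ρ : ℝ} (hc : 0 ≤ c) (hρ : 0 < ρ) :
    (c • (Xᵀ * X) + ρ • A).PosDef :=
  PosDef.posSemidef_add ((posSemidef_conjTranspose_mul_self X).smul hc) (hA.smul hρ)

theorem mulVec_penalizedLeastSquares_sub [DecidableEq k] {X : Matrix m k ℝ}
    {A M : Matrix k k ℝ} {s t ρ : ℝ} (hM : M = (s * t) • (Xᵀ * X) + ρ • A) (hMu : IsUnit M)
    (α : k → ℝ) (d : m → ℝ) :
    M *ᵥ (s • M⁻¹ *ᵥ (Xᵀ *ᵥ (t • X *ᵥ α + d)) - α) = s • Xᵀ *ᵥ d - ρ • A *ᵥ α := by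
  rw [mulVec_sub, mulVec_smul, mulVec_mulVec, mul_nonsing_inv M (M.isUnit_iff_isUnit_det.mp hMu),
    one_mulVec, hM]
  simp only [add_mulVec, smul_mulVec, ← mulVec_mulVec, mulVec_add, mulVec_smul, mul_smul, smul_add]
  abel

theorem smul_dotProduct_mulVec_le_of_mulVec_eq {X : Matrix m k ℝ} {A : Matrix k k ℝ}
    (hA : A.PosSemidef) {c s ρ : ℝ} (hc : 0 < c) (hρ : 0 ≤ ρ) {u α : k → ℝ} {d : m → ℝ}
    (hu : (c • (Xᵀ * X) + ρ • A) *ᵥ u = s • Xᵀ *ᵥ d - ρ • A *ᵥ α) :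
    c * (X *ᵥ u ⬝ᵥ X *ᵥ u) ≤ s ^ 2 / c * (d ⬝ᵥ d) + ρ * (α ⬝ᵥ A *ᵥ α) := by
  have henergy : c * (X *ᵥ u ⬝ᵥ X *ᵥ u) + ρ * (u ⬝ᵥ A *ᵥ u)
      = s * (X *ᵥ u ⬝ᵥ d) - ρ * (u ⬝ᵥ A *ᵥ α) := by
    have h := congrArg (u ⬝ᵥ ·) hu
    simpa only [add_mulVec, smul_mulVec, ← mulVec_mulVec, dotProduct_add, dotProduct_sub,
      dotProduct_smul, smul_eq_mul, dotProduct_transpose_mulVec, dotProduct_comm d] using h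
  have hyoung : 2 * c * s * (X *ᵥ u ⬝ᵥ d) ≤ c ^ 2 * (X *ᵥ u ⬝ᵥ X *ᵥ u) + s ^ 2 * (d ⬝ᵥ d) := by
    have h := two_mul_dotProduct_le (c • X *ᵥ u) (s • d)
    simp only [dotProduct_smul, smul_dotProduct, smul_eq_mul] at h
    linarith
  have hcross : -2 * (u ⬝ᵥ A *ᵥ α) ≤ u ⬝ᵥ A *ᵥ u + α ⬝ᵥ A *ᵥ α := by
    simpa [mulVec_neg] using hA.two_mul_dotProduct_mulVec_le u (-α)
  have hu_nonneg : 0 ≤ u ⬝ᵥ A *ᵥ u := by simpa using hA.dotProduct_mulVec_nonneg u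
  rw [div_mul_eq_mul_div, ← sub_le_iff_le_add, le_div_iff₀ hc]
  nlinarith [mul_le_mul_of_nonneg_left hcross (mul_nonneg hc.le hρ),
    mul_nonneg (mul_nonneg hc.le hρ) hu_nonneg]

end Matrix

theorem stmt0_general {n p : ℕ} (hn : 1 ≤ n) (hp : 1 ≤ p)
    (X : Matrix (Fin n) (Fin p) ℝ) (A : Matrix (Fin p) (Fin p) ℝ)
    (hA : A.PosDef) (ρ : ℝ) (hρ : 0 < ρ)
    (α : Fin p → ℝ) (d : Fin n → ℝ)
    (M : Matrix (Fin p) (Fin p) ℝ)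
    (hM : M = (1 / ((n : ℝ) * (p : ℝ))) • (Xᵀ * X) + ρ • A)
    (ahat : Fin p → ℝ)
    (hahat : ahat = (1 / (n : ℝ)) •
      M⁻¹.mulVec (Xᵀ.mulVec ((1 / (p : ℝ)) • X.mulVec α + d))) :
    (1 / ((n : ℝ) * (p : ℝ) ^ 2)) * (X.mulVec (ahat - α) ⬝ᵥ X.mulVec (ahat - α)) ≤
      2 * (ρ / (p : ℝ)) * (α ⬝ᵥ A.mulVec α) + (4 / (n : ℝ)) * (d ⬝ᵥ d) := by
  have hn' : (0 : ℝ) < n := Nat.cast_pos.mpr hn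
  have hp' : (0 : ℝ) < p := Nat.cast_pos.mpr hp
  have hM' : M = (1 / n * (1 / p) : ℝ) • (Xᵀ * X) + ρ • A := by rw [hM, one_div_mul_one_div]
  have hMpd : M.PosDef := hM' ▸ PosDef.smul_transpose_mul_self_add_smul X hA (by positivity) hρ
  have hu := mulVec_penalizedLeastSquares_sub hM' hMpd.isUnit α d
  rw [← hahat, hM] at hu
  have key := smul_dotProduct_mulVec_le_of_mulVec_eq hA.posSemidef (by positivity) hρ.le hu
  have hα : 0 ≤ α ⬝ᵥ A *ᵥ α := hA.posSemidef.dotProduct_mulVec_nonneg α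
  have hd : 0 ≤ d ⬝ᵥ d := dotProduct_star_self_nonneg d
  calc (1 / ((n : ℝ) * (p : ℝ) ^ 2)) * (X *ᵥ (ahat - α) ⬝ᵥ X *ᵥ (ahat - α))
      = 1 / p * (1 / (n * p) * (X *ᵥ (ahat - α) ⬝ᵥ X *ᵥ (ahat - α))) := by ring
    _ ≤ 1 / p * ((1 / n) ^ 2 / (1 / (n * p)) * (d ⬝ᵥ d) + ρ * (α ⬝ᵥ A *ᵥ α)) := by gcongr
    _ = ρ / p * (α ⬝ᵥ A *ᵥ α) + 1 / n * (d ⬝ᵥ d) := by field_simp; ring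
    _ ≤ 2 * (ρ / p) * (α ⬝ᵥ A *ᵥ α) + (4 / n) * (d ⬝ᵥ d) := by
      gcongr ?_ * _ + ?_ * _
      · linarith [div_pos hρ hp']
      · gcongr; norm_num

/-- Deterministic bias bound (Theorem 1, relation (3.1)) for the smoothing
splines estimator: with `M = (1/(np)) XᵀX + ρ A` and
`â = (1/n) M⁻¹ Xᵀ ((1/p) X α + d)`, one has
`(1/(np²)) ‖X(â − α)‖² ≤ 2 (ρ/p) αᵀAα + (4/n) ‖d‖²`. -/
theorem stmt0 {n p : ℕ} (hn : 1 ≤ n) (hp : 1 ≤ p)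
    (X : Matrix (Fin n) (Fin p) ℝ) (A : Matrix (Fin p) (Fin p) ℝ)
    (hA : A.PosDef) (hAsymm : A.IsSymm) (ρ : ℝ) (hρ : 0 < ρ)
    (α : Fin p → ℝ) (d : Fin n → ℝ)
    (M : Matrix (Fin p) (Fin p) ℝ)
    (hM : M = (1 / ((n : ℝ) * (p : ℝ))) • (Xᵀ * X) + ρ • A)
    (ahat : Fin p → ℝ)
    (hahat : ahat = (1 / (n : ℝ)) •
      M⁻¹.mulVec (Xᵀ.mulVec ((1 / (p : ℝ)) • X.mulVec α + d))) :
    (1 / ((n : ℝ) * (p : ℝ) ^ 2)) * (X.mulVec (ahat - α) ⬝ᵥ X.mulVec (ahat - α)) ≤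
      2 * (ρ / (p : ℝ)) * (α ⬝ᵥ A.mulVec α) + (4 / (n : ℝ)) * (d ⬝ᵥ d) :=
  stmt0_general hn hp X A hA ρ hρ α d M hM ahat hahat
end

section
/- Let (Ω, 𝒜, ℙ) be a probability space and let ε₁, …, ε_n : Ω → ℝ be independent, square-integrable random variables with E(ε_i) = 0 and Var(ε_i) = σ² for all i. Let X be a real n×p matrix, A a symmetric positive definite real p×p matrix, ρ > 0, and y₀ ∈ ℝ^n. Set M := (1/(n·p))·Xᵀ·X + ρ·A, ε̄(ω) := (1/n)·Σᵢ ε_i(ω), and define the random vector α̂(ω) := (1/n)·M⁻¹·Xᵀ·(y₀ + ε(ω) − ε̄(ω)·𝟙), where 𝟙 ∈ ℝ^n is the all-ones vector. Then E[ ‖α̂ − E(α̂)‖²_{Γ_{n,p}} ] ≤ (σ²/n)·Tr[ M⁻¹ · (1/(n·p))·Xᵀ·X ], where ‖u‖²_{Γ_{n,p}} := (1/(n·p²))·‖X·u‖² for u ∈ ℝ^p. -/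
/-!
The estimator is affine in the noise: `α̂ = a + B ε` with `B = (1/n) M⁻¹ Xᵀ Π`, where `Π` is the
centering matrix, so `X (α̂ - E α̂) = X B ε` and, the `εᵢ` being independent and centered with
variance `σ²`, its expected squared norm is `σ² tr(X B (X B)ᵀ)`. Since `Π Πᵀ = Π ≼ 1`, this is at
most `σ² tr((X M⁻¹ Xᵀ)²) / n²`, which after normalisation is `(σ²/n) tr((M⁻¹K)²)` with
`K = XᵀX/(np)`. Finally `M⁻¹K - (M⁻¹K)² = M⁻¹ K M⁻¹ (ρA)` has nonnegative trace.
-/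

open Matrix MeasureTheory ProbabilityTheory

namespace Matrix

variable {ι κ : Type*} [Fintype ι] [Fintype κ]

variable (ι) in
noncomputable def centeringMatrix [DecidableEq ι] : Matrix ι ι ℝ :=
  1 - (1 / (Fintype.card ι : ℝ)) • of fun _ _ => 1

lemma centeringMatrix_mulVec [DecidableEq ι] (v : ι → ℝ) :
    centeringMatrix ι *ᵥ v = fun i => v i - 1 / (Fintype.card ι : ℝ) * ∑ j, v j := by
  rw [centeringMatrix, sub_mulVec, one_mulVec, smul_mulVec]
  ext i
  simp [mulVec, dotProduct]

lemma posSemidef_one_sub_centeringMatrix_mul_transpose [DecidableEq ι] :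
    (1 - centeringMatrix ι * (centeringMatrix ι)ᵀ).PosSemidef := by
  set c : ℝ := (Fintype.card ι : ℝ)
  set J : Matrix ι ι ℝ := of fun _ _ => 1
  have hJJ : J * J = c • J := by ext; simp [J, c, mul_apply]
  have hJt : Jᵀ = J := by ext; simp [J]
  have hc : 1 / c * (1 / c * c) = 1 / c := by
    rcases eq_or_ne c 0 with h | h
    · simp [h]
    · field_simp
  have hsub : 1 - centeringMatrix ι * (centeringMatrix ι)ᵀ = (1 / c) • vecMulVec 1 (star 1) := by
    have hcentering : centeringMatrix ι = 1 - (1 / c) • J := rfl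
    have hJ : J = vecMulVec 1 (star 1) := by ext; simp [J, vecMulVec]
    simp only [hcentering, transpose_sub, transpose_one, transpose_smul, hJt, Matrix.sub_mul,
      Matrix.mul_sub, Matrix.one_mul, Matrix.mul_one, Matrix.smul_mul, Matrix.mul_smul, hJJ,
      smul_smul, ← hJ]
    rw [smul_sub, smul_smul, hc]
    abel
  rw [hsub]
  exact (posSemidef_vecMulVec_self_star 1).smul (by positivity)

lemma PosSemidef.trace_mul_nonneg [DecidableEq ι] {P Q : Matrix ι ι ℝ} (hP : P.PosSemidef)
    (hQ : Q.PosSemidef) : 0 ≤ (P * Q).trace := by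
  obtain ⟨B, rfl⟩ : ∃ B : Matrix ι ι ℝ, Q = star B * B := by
    open scoped MatrixOrder in exact CStarAlgebra.nonneg_iff_eq_star_mul_self.mp hQ.nonneg
  rw [star_eq_conjTranspose, ← Matrix.mul_assoc, trace_mul_comm, ← Matrix.mul_assoc]
  exact (hP.mul_mul_conjTranspose_same B).trace_nonneg

lemma trace_mul_mul_transpose_le_of_posSemidef [DecidableEq ι] {Q : Matrix ι ι ℝ}
    (hQ : (1 - Q * Qᵀ).PosSemidef) (C : Matrix κ ι ℝ) :
    (C * Q * (C * Q)ᵀ).trace ≤ (C * Cᵀ).trace := by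
  have h := (hQ.mul_mul_conjTranspose_same C).trace_nonneg
  rw [conjTranspose_eq_transpose_of_trivial, Matrix.mul_sub, Matrix.sub_mul, trace_sub,
    Matrix.mul_one] at h
  rw [transpose_mul, ← Matrix.mul_assoc, Matrix.mul_assoc C]
  linarith

lemma trace_inv_mul_sq_le [DecidableEq ι] {K R : Matrix ι ι ℝ} (hK : K.PosSemidef)
    (hR : R.PosSemidef) :
    ((K + R)⁻¹ * K * ((K + R)⁻¹ * K)).trace ≤ ((K + R)⁻¹ * K).trace := by
  set G := (K + R)⁻¹
  have hG : G.PosSemidef := (hK.add hR).inv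
  have hGKG : (G * K * G).PosSemidef := by
    simpa only [hG.isHermitian.eq] using hK.mul_mul_conjTranspose_same G
  -- for singular `K + R` both sides vanish, as `G = 0`
  have hdiff : G * K * G * R = G * K - G * K * (G * K) := by
    by_cases h : IsUnit (K + R).det
    · calc G * K * G * R = G * K * (G * (K + R)) - G * K * (G * K) := by noncomm_ring
        _ = G * K - G * K * (G * K) := by rw [nonsing_inv_mul _ h, Matrix.mul_one]
    · simp [G, nonsing_inv_apply_not_isUnit _ h]
  have := hGKG.trace_mul_nonneg hR
  rw [hdiff, trace_sub] at this
  linarith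

lemma trace_centered_smoother_sq_le {n p : ℕ} (X : Matrix (Fin n) (Fin p) ℝ)
    {M R : Matrix (Fin p) (Fin p) ℝ} (hR : R.PosSemidef)
    (hM : M = (1 / ((n : ℝ) * p)) • (Xᵀ * X) + R) :
    1 / ((n : ℝ) * p ^ 2) *
        (X * ((1 / (n : ℝ)) • (M⁻¹ * Xᵀ) * centeringMatrix (Fin n)) *
          (X * ((1 / (n : ℝ)) • (M⁻¹ * Xᵀ) * centeringMatrix (Fin n)))ᵀ).trace ≤
      1 / n * (M⁻¹ * ((1 / ((n : ℝ) * p)) • (Xᵀ * X))).trace := by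
  set K := (1 / ((n : ℝ) * p)) • (Xᵀ * X)
  set C := X * ((1 / (n : ℝ)) • (M⁻¹ * Xᵀ))
  have hK : K.PosSemidef := by
    simpa only [conjTranspose_eq_transpose_of_trivial] using
      (posSemidef_conjTranspose_mul_self X).smul (by positivity)
  have hMinv_symm : (M⁻¹)ᵀ = M⁻¹ := by
    simpa only [conjTranspose_eq_transpose_of_trivial] using (hM ▸ hK.add hR).inv.isHermitian.eq
  have htrace : 1 / ((n : ℝ) * p ^ 2) * (C * Cᵀ).trace = 1 / n * (M⁻¹ * K * (M⁻¹ * K)).trace := by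
    simp only [C, K, transpose_mul, transpose_smul, transpose_transpose, hMinv_symm,
      Matrix.mul_smul, Matrix.smul_mul, trace_smul, smul_eq_mul, Matrix.mul_assoc]
    rw [trace_mul_comm X]
    simp only [Matrix.mul_assoc]
    ring
  calc _ ≤ 1 / ((n : ℝ) * p ^ 2) * (C * Cᵀ).trace := by
        gcongr
        simpa only [C, Matrix.mul_assoc] using
          trace_mul_mul_transpose_le_of_posSemidef
            posSemidef_one_sub_centeringMatrix_mul_transpose C
    _ ≤ 1 / n * (M⁻¹ * K).trace := by
        rw [htrace, hM]
        gcongr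
        exact trace_inv_mul_sq_le hK hR

end Matrix

section Noise

variable {Ω ι κ : Type*} [MeasurableSpace Ω] {P : Measure Ω} [Fintype ι] {ε : ι → Ω → ℝ}

lemma integral_add_mulVec_apply [IsProbabilityMeasure P] (hint : ∀ i, Integrable (ε i) P)
    (hmean : ∀ i, ∫ ω, ε i ω ∂P = 0) (a : κ → ℝ) (B : Matrix κ ι ℝ) (k : κ) :
    ∫ ω, (a + B *ᵥ fun i => ε i ω) k ∂P = a k := by
  simp only [Pi.add_apply, mulVec, dotProduct]
  rw [integral_add (integrable_const _) (integrable_finsetSum _ fun i _ => (hint i).const_mul _),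
    integral_finsetSum _ fun i _ => (hint i).const_mul _]
  simp [integral_const_mul, hmean]

lemma integral_sq_sum_mul_of_iIndepFun [IsProbabilityMeasure P] (hindep : iIndepFun ε P)
    (hL2 : ∀ i, MemLp (ε i) 2 P) (hmean : ∀ i, ∫ ω, ε i ω ∂P = 0) {σ : ℝ}
    (hvar : ∀ i, variance (ε i) P = σ ^ 2) (w : ι → ℝ) :
    ∫ ω, (∑ i, w i * ε i ω) ^ 2 ∂P = σ ^ 2 * ∑ i, w i ^ 2 := by
  let Y : ι → Ω → ℝ := fun i ω => w i * ε i ω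
  have hYL2 : ∀ i, MemLp (Y i) 2 P := fun i => (hL2 i).const_mul (w i)
  have hYindep : Set.Pairwise ↑(Finset.univ : Finset ι) fun i j => Y i ⟂ᵢ[P] Y j :=
    fun i _ j _ hij => (hindep.indepFun hij).comp (measurable_const_mul (w i))
      (measurable_const_mul (w j))
  have hsum : ∑ i, Y i = fun ω => ∑ i, w i * ε i ω := by ext ω; simp [Y]
  have hmean_sum : ∫ ω, ∑ i, w i * ε i ω ∂P = 0 := by
    rw [integral_finsetSum _ fun i _ => ((hL2 i).integrable one_le_two).const_mul (w i)]
    simp [integral_const_mul, hmean]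
  rw [← variance_of_integral_eq_zero (memLp_finsetSum _ fun i _ => hYL2 i).aemeasurable hmean_sum,
    ← hsum, IndepFun.variance_sum (fun i _ => hYL2 i) hYindep, Finset.mul_sum]
  refine Finset.sum_congr rfl fun i _ => ?_
  rw [variance_const_mul, hvar, mul_comm]

lemma integral_mulVec_dotProduct_mulVec_of_iIndepFun [Fintype κ] [IsProbabilityMeasure P]
    (hindep : iIndepFun ε P) (hL2 : ∀ i, MemLp (ε i) 2 P) (hmean : ∀ i, ∫ ω, ε i ω ∂P = 0)
    {σ : ℝ} (hvar : ∀ i, variance (ε i) P = σ ^ 2) (W : Matrix κ ι ℝ) :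
    ∫ ω, (W *ᵥ fun i => ε i ω) ⬝ᵥ (W *ᵥ fun i => ε i ω) ∂P = σ ^ 2 * (W * Wᵀ).trace := by
  have hsq : ∀ ω, (W *ᵥ fun i => ε i ω) ⬝ᵥ (W *ᵥ fun i => ε i ω)
      = ∑ k, (∑ i, W k i * ε i ω) ^ 2 := fun ω => by
    simp only [dotProduct, mulVec, sq]
  simp_rw [hsq]
  rw [integral_finsetSum _ fun k _ =>
      (memLp_finsetSum _ fun i _ => (hL2 i).const_mul (W k i)).integrable_sq,
    Finset.sum_congr rfl fun k _ => integral_sq_sum_mul_of_iIndepFun hindep hL2 hmean hvar (W k)]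
  simp only [trace, diag_apply, mul_apply, transpose_apply, Finset.mul_sum, sq]

end Noise

theorem stmt1_general {n p : ℕ}
    {Ω : Type*} [MeasurableSpace Ω] (P : Measure Ω) [IsProbabilityMeasure P]
    (ε : Fin n → Ω → ℝ)
    (hindep : iIndepFun ε P)
    (hL2 : ∀ i, MemLp (ε i) 2 P)
    (hmean : ∀ i, ∫ ω, ε i ω ∂P = 0)
    (σ : ℝ) (hvar : ∀ i, variance (ε i) P = σ ^ 2)
    (X : Matrix (Fin n) (Fin p) ℝ) (A : Matrix (Fin p) (Fin p) ℝ)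
    (hA : A.PosDef)
    (ρ : ℝ) (hρ : 0 < ρ) (y₀ : Fin n → ℝ)
    (M : Matrix (Fin p) (Fin p) ℝ)
    (hM : M = (1 / ((n : ℝ) * (p : ℝ))) • (Xᵀ * X) + ρ • A)
    (αhat : Ω → Fin p → ℝ)
    (hαhat : ∀ ω, αhat ω = (1 / (n : ℝ)) •
      M⁻¹.mulVec (Xᵀ.mulVec (y₀ + fun i => ε i ω - (1 / (n : ℝ)) * ∑ i', ε i' ω)))
    (Eαhat : Fin p → ℝ) (hE : ∀ j, Eαhat j = ∫ ω, αhat ω j ∂P) :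
    ∫ ω, (1 / ((n : ℝ) * (p : ℝ) ^ 2)) *
        (X.mulVec (αhat ω - Eαhat) ⬝ᵥ X.mulVec (αhat ω - Eαhat)) ∂P ≤
      (σ ^ 2 / (n : ℝ)) * (M⁻¹ * ((1 / ((n : ℝ) * (p : ℝ))) • (Xᵀ * X))).trace := by
  set B := (1 / (n : ℝ)) • (M⁻¹ * Xᵀ) * centeringMatrix (Fin n)
  have hαhat_affine : ∀ ω, αhat ω = (1 / (n : ℝ)) • M⁻¹ *ᵥ (Xᵀ *ᵥ y₀) + B *ᵥ fun i => ε i ω := by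
    intro ω
    have hcentered := centeringMatrix_mulVec fun i => ε i ω
    rw [Fintype.card_fin] at hcentered
    rw [hαhat ω, ← hcentered, mulVec_add, mulVec_add, smul_add]
    simp only [B, ← mulVec_mulVec, smul_mulVec]
  have hEαhat : Eαhat = (1 / (n : ℝ)) • M⁻¹ *ᵥ (Xᵀ *ᵥ y₀) := by
    ext j
    simp_rw [hE j, hαhat_affine]
    exact integral_add_mulVec_apply (fun i => (hL2 i).integrable one_le_two) hmean _ B j
  simp_rw [hαhat_affine, hEαhat, add_sub_cancel_left, mulVec_mulVec]
  rw [integral_const_mul, integral_mulVec_dotProduct_mulVec_of_iIndepFun hindep hL2 hmean hvar]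
  calc _ = σ ^ 2 * (1 / ((n : ℝ) * p ^ 2) * (X * B * (X * B)ᵀ).trace) := by ring
    _ ≤ σ ^ 2 * (1 / n * (M⁻¹ * ((1 / ((n : ℝ) * p)) • (Xᵀ * X))).trace) :=
        mul_le_mul_of_nonneg_left
          (trace_centered_smoother_sq_le X (hA.posSemidef.smul hρ.le) hM) (sq_nonneg σ)
    _ = _ := by ring

/-- Variance bound, first step of relation (3.2) in Theorem 1: for the
penalized estimator computed from `y₀` plus centered i.i.d.-type noise,
`E ‖α̂ − E(α̂)‖²_{Γ_{n,p}} ≤ (σ²/n)·Tr[M⁻¹ · (1/(np)) XᵀX]`. -/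
theorem stmt1 {n p : ℕ} (hn : 1 ≤ n) (hp : 1 ≤ p)
    {Ω : Type*} [MeasurableSpace Ω] (P : Measure Ω) [IsProbabilityMeasure P]
    (ε : Fin n → Ω → ℝ)
    (hindep : iIndepFun ε P)
    (hL2 : ∀ i, MemLp (ε i) 2 P)
    (hmean : ∀ i, ∫ ω, ε i ω ∂P = 0)
    (σ : ℝ) (hvar : ∀ i, variance (ε i) P = σ ^ 2)
    (X : Matrix (Fin n) (Fin p) ℝ) (A : Matrix (Fin p) (Fin p) ℝ)
    (hA : A.PosDef) (hAsymm : A.IsSymm)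
    (ρ : ℝ) (hρ : 0 < ρ) (y₀ : Fin n → ℝ)
    (M : Matrix (Fin p) (Fin p) ℝ)
    (hM : M = (1 / ((n : ℝ) * (p : ℝ))) • (Xᵀ * X) + ρ • A)
    (αhat : Ω → Fin p → ℝ)
    (hαhat : ∀ ω, αhat ω = (1 / (n : ℝ)) •
      M⁻¹.mulVec (Xᵀ.mulVec (y₀ + fun i => ε i ω - (1 / (n : ℝ)) * ∑ i', ε i' ω)))
    (Eαhat : Fin p → ℝ) (hE : ∀ j, Eαhat j = ∫ ω, αhat ω j ∂P) :
    ∫ ω, (1 / ((n : ℝ) * (p : ℝ) ^ 2)) *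
        (X.mulVec (αhat ω - Eαhat) ⬝ᵥ X.mulVec (αhat ω - Eαhat)) ∂P ≤
      (σ ^ 2 / (n : ℝ)) * (M⁻¹ * ((1 / ((n : ℝ) * (p : ℝ))) • (Xᵀ * X))).trace :=
  stmt1_general P ε hindep hL2 hmean σ hvar X A hA ρ hρ y₀ M hM αhat hαhat Eαhat hE
end

section
/- Let p ≥ 1, m ≥ 1, q ≥ 0 (q real), C > 0, C₀ > 0 and ρ ∈ (0, 1]. Set k := ⌈ρ^{−1/(2m+2q+1)}⌉ and assume m + k + 1 ≤ p. Let S be a symmetric positive semidefinite real p×p matrix with eigenvalues λ₁ ≥ λ₂ ≥ … ≥ λ_p ≥ 0 satisfying Σ_{j=k+1}^p λ_j ≤ C·k^{−2q}, and let A be a symmetric positive definite real p×p matrix with eigenvalues 0 < μ₁ ≤ μ₂ ≤ … ≤ μ_p satisfying k^{2m} ≤ C₀·μ_{m+k+1}. Then Tr[ (S + ρ·A)⁻¹ · S ] ≤ m + k·(2 + C·C₀). -/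
/-!
Let `B = S + ρA` and split `S = S₁ + S₂` along its eigenbasis, `S₁` carrying the `k` largest
eigenvalues. Both parts satisfy `Sᵢ ≤ B`, i.e. `B^{-1/2} Sᵢ B^{-1/2} ≤ 1`. Since `S₁` has rank at
most `k`, this gives `Tr(B⁻¹S₁) ≤ k`. For `S₂`, cut `B^{-1/2} S₂ B^{-1/2}` with the projection `Q`
onto the first `m + k` eigenvectors of `A`: the `Q`-part has trace at most `m + k`, while
`1 - Q ≤ (ρ μ_{m+k+1})⁻¹ B` bounds the rest by `(ρ μ_{m+k+1})⁻¹ Tr S₂`. The choice of `k` makes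
this last term at most `C C₀ k`.
-/

open Matrix

open scoped MatrixOrder

namespace Matrix

variable {n : Type*} [Fintype n]

lemma trace_mono {A B : Matrix n n ℝ} (h : A ≤ B) : A.trace ≤ B.trace := by
  simpa [trace_sub] using (le_iff.mp h).trace_nonneg

variable [DecidableEq n]

lemma trace_mul_le_trace_mul_of_nonneg {X N N' : Matrix n n ℝ} (hX : 0 ≤ X) (h : N ≤ N') :
    (X * N).trace ≤ (X * N').trace := by
  have hR : IsSelfAdjoint (CFC.sqrt X) := CFC.sqrt_nonneg X |>.isSelfAdjoint
  have hRR : CFC.sqrt X * CFC.sqrt X = X := CFC.sqrt_mul_sqrt_self X hX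
  have key := trace_mono (star_left_conjugate_le_conjugate h (CFC.sqrt X))
  rwa [hR.star_eq, trace_mul_cycle, hRR, trace_mul_cycle, hRR] at key

-- Both sides are Schur complements of the block matrix `[1, Y; Yᴴ, 1]`.
lemma star_mul_self_le_one_iff (Y : Matrix n n ℝ) : star Y * Y ≤ 1 ↔ Y * star Y ≤ 1 := by
  let : Invertible (1 : Matrix n n ℝ) := invertibleOne
  have h₁₁ := PosDef.fromBlocks₁₁ Y 1 PosDef.one
  have h₂₂ := PosDef.fromBlocks₂₂ 1 Y PosDef.one
  simp only [inv_one, mul_one] at h₁₁ h₂₂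
  rw [le_iff, le_iff, star_eq_conjTranspose, ← h₁₁, h₂₂]

lemma trace_mul_le_trace_of_le_one {M P : Matrix n n ℝ} (hM : M ≤ 1) (hP : IsSelfAdjoint P)
    (hP' : IsIdempotentElem P) : (M * P).trace ≤ P.trace :=
  calc (M * P).trace = (star P * M * P).trace := by
        rw [hP.star_eq, trace_mul_cycle, hP'.eq, trace_mul_comm]
    _ ≤ (star P * 1 * P).trace := trace_mono (star_left_conjugate_le_conjugate hM P)
    _ = P.trace := by rw [mul_one, hP.star_eq, hP'.eq]

lemma PosDef.exists_inv_sqrt {B : Matrix n n ℝ} (hB : B.PosDef) :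
    ∃ G : Matrix n n ℝ, IsSelfAdjoint G ∧ G * B * G = 1 ∧ G * G = B⁻¹ := by
  set F := CFC.sqrt B
  have hFF : F * F = B := CFC.sqrt_mul_sqrt_self B hB.posSemidef.nonneg
  have hF : IsUnit F.det := by
    rw [← isUnit_iff_isUnit_det]
    exact isUnit_of_mul_isUnit_left (hFF ▸ hB.isUnit)
  refine ⟨F⁻¹, ?_, ?_, by rw [← hFF, mul_inv_rev]⟩
  · rw [IsSelfAdjoint, star_eq_conjTranspose, conjTranspose_nonsing_inv,
      ← star_eq_conjTranspose, (CFC.sqrt_nonneg B).isSelfAdjoint.star_eq]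
  · rw [← hFF, ← mul_assoc, nonsing_inv_mul _ hF, one_mul, mul_nonsing_inv _ hF]

lemma trace_inv_mul_mul_self_le {B R P : Matrix n n ℝ} (hB : B.PosDef) (hR : IsSelfAdjoint R)
    (hRB : R * R ≤ B) (hP : IsSelfAdjoint P) (hP' : IsIdempotentElem P) (hRP : R * P = R) :
    (B⁻¹ * (R * R)).trace ≤ P.trace := by
  obtain ⟨G, hG, hGBG, hGG⟩ := hB.exists_inv_sqrt
  have hY : (G * R) * star (G * R) ≤ 1 := by
    rw [star_mul, hR.star_eq, hG.star_eq, ← hGBG]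
    simpa only [hG.star_eq, mul_assoc] using star_right_conjugate_le_conjugate hRB G
  have hM : R * B⁻¹ * R ≤ 1 := by
    have := (star_mul_self_le_one_iff _).mpr hY
    rwa [star_mul, hR.star_eq, hG.star_eq, mul_assoc, ← mul_assoc G, hGG, ← mul_assoc] at this
  calc (B⁻¹ * (R * R)).trace = (R * B⁻¹ * R * P).trace := by
        rw [mul_assoc _ R P, hRP, ← mul_assoc, trace_mul_cycle]
    _ ≤ P.trace := trace_mul_le_trace_of_le_one hM hP hP'

lemma trace_inv_mul_le_of_le {B X Q : Matrix n n ℝ} (hB : B.PosDef) (hX : 0 ≤ X) (hXB : X ≤ B)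
    (hQ : IsSelfAdjoint Q) (hQ' : IsIdempotentElem Q) {c : ℝ} (hQB : 1 - Q ≤ c • B) :
    (B⁻¹ * X).trace ≤ Q.trace + c * X.trace := by
  obtain ⟨G, hG, hGBG, hGG⟩ := hB.exists_inv_sqrt
  have hM : G * X * G ≤ 1 := by
    simpa [hG.star_eq, hGBG] using star_left_conjugate_le_conjugate hXB G
  have hN : G * (1 - Q) * G ≤ c • 1 := by
    simpa [hG.star_eq, hGBG] using star_left_conjugate_le_conjugate hQB G
  have hQX : (X * (G * Q * G)).trace = (G * X * G * Q).trace := by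
    simp only [← mul_assoc]
    rw [trace_mul_comm _ G]
    simp only [mul_assoc]
  calc (B⁻¹ * X).trace = (X * (G * Q * G)).trace + (X * (G * (1 - Q) * G)).trace := by
        rw [← trace_add, ← mul_add, ← hGG, trace_mul_comm]
        congr 2
        noncomm_ring
    _ = (G * X * G * Q).trace + (X * (G * (1 - Q) * G)).trace := by rw [hQX]
    _ ≤ Q.trace + (X * c • 1).trace :=
        add_le_add (trace_mul_le_trace_of_le_one hM hQ hQ') (trace_mul_le_trace_mul_of_nonneg hX hN)
    _ = Q.trace + c * X.trace := by simp [trace_smul]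

noncomputable def conjDiagonal (U : orthogonalGroup n ℝ) : (n → ℝ) →ₐ[ℝ] Matrix n n ℝ :=
  (Unitary.conjStarAlgAut ℝ _ U).toAlgEquiv.toAlgHom.comp (diagonalAlgHom ℝ)

section conjDiagonal

variable (U : orthogonalGroup n ℝ) (d : n → ℝ)

lemma conjDiagonal_apply :
    conjDiagonal U d = (U : Matrix n n ℝ) * diagonal d * (U : Matrix n n ℝ)ᵀ := by
  simp [conjDiagonal, star_eq_conjTranspose]

lemma isSelfAdjoint_conjDiagonal : IsSelfAdjoint (conjDiagonal U d) := by
  simp [conjDiagonal, IsSelfAdjoint, star_mul, mul_assoc, star_eq_conjTranspose]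

lemma trace_conjDiagonal : (conjDiagonal U d).trace = ∑ i, d i := by
  simp [conjDiagonal, trace_mul_cycle]

variable {d}

lemma conjDiagonal_nonneg (hd : 0 ≤ d) : 0 ≤ conjDiagonal U d := by
  simpa [conjDiagonal] using star_right_conjugate_nonneg (posSemidef_diagonal_iff.mpr hd).nonneg U

lemma conjDiagonal_mono : Monotone (conjDiagonal U) := fun d d' h => by
  simpa [sub_nonneg, map_sub] using conjDiagonal_nonneg U (sub_nonneg.mpr h)

lemma conjDiagonal_indicator_mul (s : Set n) (f g : n → ℝ) :
    conjDiagonal U (s.indicator f) * conjDiagonal U (s.indicator g) =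
      conjDiagonal U (s.indicator (f * g)) := by
  rw [← map_mul]
  exact congrArg _ (Set.indicator_mul s f g).symm

lemma isIdempotentElem_conjDiagonal_indicator_one (s : Set n) :
    IsIdempotentElem (conjDiagonal U (s.indicator 1)) := by
  rw [IsIdempotentElem, conjDiagonal_indicator_mul, one_mul]

lemma trace_conjDiagonal_indicator_one (s : Finset n) :
    (conjDiagonal U ((s : Set n).indicator 1)).trace = s.card := by
  simp [trace_conjDiagonal, Set.indicator_apply]

end conjDiagonal

lemma trace_inv_mul_conjDiagonal_indicator_le {B : Matrix n n ℝ} (hB : B.PosDef)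
    (U : orthogonalGroup n ℝ) (s : Finset n) {d : n → ℝ} (hd : 0 ≤ d)
    (hdB : conjDiagonal U ((s : Set n).indicator d) ≤ B) :
    (B⁻¹ * conjDiagonal U ((s : Set n).indicator d)).trace ≤ s.card := by
  set R := conjDiagonal U ((s : Set n).indicator fun i => √(d i))
  set P := conjDiagonal U ((s : Set n).indicator 1)
  have hRR : R * R = conjDiagonal U ((s : Set n).indicator d) := by
    rw [conjDiagonal_indicator_mul]
    congr 2
    ext i
    exact Real.mul_self_sqrt (hd i)
  have hRP : R * P = R := by
    rw [conjDiagonal_indicator_mul, mul_one]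
  rw [← hRR] at hdB ⊢
  calc _ ≤ P.trace := trace_inv_mul_mul_self_le hB (isSelfAdjoint_conjDiagonal _ _) hdB
        (isSelfAdjoint_conjDiagonal _ _) (isIdempotentElem_conjDiagonal_indicator_one _ _) hRP
    _ = s.card := trace_conjDiagonal_indicator_one _ _

theorem trace_inv_add_smul_mul_le {S A : Matrix n n ℝ} {ρ : ℝ} (hρ : 0 < ρ) (hA : A.PosDef)
    {U V : orthogonalGroup n ℝ} {lam μ : n → ℝ} (hlam : 0 ≤ lam) (hμ : 0 ≤ μ)
    (hS : S = conjDiagonal U lam) (hAμ : A = conjDiagonal V μ)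
    (s t : Finset n) {μ₀ : ℝ} (hμ₀ : 0 < μ₀) (ht : ∀ j ∉ t, μ₀ ≤ μ j) :
    ((S + ρ • A)⁻¹ * S).trace ≤ s.card + t.card + (ρ * μ₀)⁻¹ * ∑ j ∈ sᶜ, lam j := by
  have hS₀ : 0 ≤ S := hS ▸ conjDiagonal_nonneg U hlam
  have hB : (S + ρ • A).PosDef := .posSemidef_add hS₀.posSemidef (hA.smul hρ)
  have hSB : S ≤ S + ρ • A := le_add_of_nonneg_right (hA.posSemidef.smul hρ.le).nonneg
  have hpart (r : Set n) : conjDiagonal U (r.indicator lam) ≤ S + ρ • A :=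
    ((conjDiagonal_mono U (Set.indicator_le_self' fun j _ => hlam j)).trans_eq hS.symm).trans hSB
  have hQ : 1 - conjDiagonal V ((t : Set n).indicator 1) ≤ (ρ * μ₀)⁻¹ • (S + ρ • A) := calc
    _ = conjDiagonal V (((tᶜ : Finset n) : Set n).indicator 1) := by
      rw [Finset.coe_compl, Set.indicator_compl, map_sub, map_one]
    _ ≤ conjDiagonal V (μ₀⁻¹ • μ) := by
      refine conjDiagonal_mono V fun j => ?_
      by_cases hj : j ∈ t
      · simpa [hj] using mul_nonneg (inv_nonneg.2 hμ₀.le) (hμ j)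
      · simpa [hj, one_le_inv_mul₀ hμ₀] using ht j hj
    _ = (ρ * μ₀)⁻¹ • (ρ • A) := by
      rw [map_smul, hAμ, smul_smul]
      congr 1
      field_simp
    _ ≤ (ρ * μ₀)⁻¹ • (S + ρ • A) := by
      rw [smul_add]
      exact le_add_of_nonneg_left (hS₀.posSemidef.smul (by positivity)).nonneg
  have hhead := trace_inv_mul_conjDiagonal_indicator_le hB U s hlam (hpart s)
  have htail := trace_inv_mul_le_of_le hB
    (conjDiagonal_nonneg U (Set.indicator_nonneg fun j _ => hlam j))
    (hpart ((sᶜ : Finset n) : Set n)) (isSelfAdjoint_conjDiagonal _ _)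
    (isIdempotentElem_conjDiagonal_indicator_one _ _) hQ
  rw [trace_conjDiagonal_indicator_one, trace_conjDiagonal,
    Finset.sum_indicator_subset _ (Finset.subset_univ _)] at htail
  have hsplit : S = conjDiagonal U ((s : Set n).indicator lam) +
      conjDiagonal U (((sᶜ : Finset n) : Set n).indicator lam) := by
    rw [hS, ← map_add, Finset.coe_compl, Set.indicator_self_add_compl]
  nth_rw 2 [hsplit]
  rw [mul_add, trace_add]
  linarith

end Matrix

lemma rpow_neg_le_mul_pow_of_rpow_le {ρ q x : ℝ} {m : ℕ} (hρ : 0 < ρ) (hq : 0 ≤ q)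
    (hx : ρ ^ (-(1 : ℝ) / (2 * (m : ℝ) + 2 * q + 1)) ≤ x) :
    x ^ (-(2 : ℝ) * q) ≤ ρ * x ^ (2 * m + 1) := by
  have ha : 0 < 2 * (m : ℝ) + 2 * q + 1 := by positivity
  have hx₀ : 0 < x := (Real.rpow_pos_of_pos hρ _).trans_le hx
  have hxa : ρ⁻¹ ≤ x ^ (2 * (m : ℝ) + 2 * q + 1) := by
    have := Real.rpow_le_rpow (Real.rpow_pos_of_pos hρ _).le hx ha.le
    rwa [← Real.rpow_mul hρ.le, div_mul_cancel₀ _ ha.ne', Real.rpow_neg_one] at this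
  have hsplit : x ^ (2 * (m : ℝ) + 2 * q + 1) = x ^ (2 * m + 1) * x ^ (2 * q) := by
    rw [← Real.rpow_natCast, ← Real.rpow_add hx₀]
    push_cast
    ring_nf
  have hcancel : x ^ (-(2 : ℝ) * q) * x ^ (2 * q) = 1 := by
    rw [← Real.rpow_add hx₀]
    simp
  calc x ^ (-(2 : ℝ) * q) = x ^ (-(2 : ℝ) * q) * (ρ * ρ⁻¹) := by
        rw [mul_inv_cancel₀ hρ.ne', mul_one]
    _ ≤ x ^ (-(2 : ℝ) * q) * (ρ * (x ^ (2 * m + 1) * x ^ (2 * q))) := by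
        rw [← hsplit]
        gcongr
    _ = x ^ (-(2 : ℝ) * q) * x ^ (2 * q) * (ρ * x ^ (2 * m + 1)) := by ring
    _ = ρ * x ^ (2 * m + 1) := by rw [hcancel, one_mul]

open Finset in
/-- Matrix-analytic content of the variance bound (relation (3.2)) of
Theorem 1: with `k = ⌈ρ^{-1/(2m+2q+1)}⌉`, eigenvalue tail bound
`Σ_{j>k} λ_j ≤ C k^{-2q}` for `S`, and `k^{2m} ≤ C₀ μ_{m+k+1}` for the
penalty matrix `A`, one has `Tr[(S + ρA)⁻¹ S] ≤ m + k(2 + C·C₀)`. -/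
theorem stmt2 {p m : ℕ}
    (q : ℝ) (hq : 0 ≤ q) (C C₀ : ℝ) (hC : 0 < C)
    (ρ : ℝ) (hρ0 : 0 < ρ)
    (k : ℕ) (hk : k = ⌈ρ ^ (-(1 : ℝ) / (2 * (m : ℝ) + 2 * q + 1))⌉₊)
    (hkp : m + k + 1 ≤ p)
    (S A : Matrix (Fin p) (Fin p) ℝ) (hA : A.PosDef)
    (lam : Fin p → ℝ) (hlam_nonneg : ∀ j, 0 ≤ lam j)
    (U : Matrix (Fin p) (Fin p) ℝ) (hU : U ∈ Matrix.orthogonalGroup (Fin p) ℝ)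
    (hSdiag : S = U * Matrix.diagonal lam * Uᵀ)
    (μ : Fin p → ℝ) (hμ_mono : Monotone μ) (hμ_pos : ∀ j, 0 < μ j)
    (V : Matrix (Fin p) (Fin p) ℝ) (hV : V ∈ Matrix.orthogonalGroup (Fin p) ℝ)
    (hAdiag : A = V * Matrix.diagonal μ * Vᵀ)
    (htail : ∑ j ∈ Finset.univ.filter (fun j : Fin p => k ≤ (j : ℕ)), lam j
        ≤ C * (k : ℝ) ^ (-(2 : ℝ) * q))
    (hμbound : (k : ℝ) ^ (2 * m) ≤ C₀ * μ ⟨m + k, by omega⟩) :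
    ((S + ρ • A)⁻¹ * S).trace ≤ (m : ℝ) + (k : ℝ) * (2 + C * C₀) := by
  set μ₀ := μ ⟨m + k, by omega⟩
  have hμ₀ : 0 < μ₀ := hμ_pos _
  have htrace := trace_inv_add_smul_mul_le hρ0 hA (fun j => hlam_nonneg j)
    (fun j => (hμ_pos j).le) (hSdiag.trans (conjDiagonal_apply ⟨U, hU⟩ lam).symm)
    (hAdiag.trans (conjDiagonal_apply ⟨V, hV⟩ μ).symm)
    (univ.filter fun j : Fin p => (j : ℕ) < k) (univ.filter fun j : Fin p => (j : ℕ) < m + k)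
    hμ₀ fun j hj => hμ_mono (by simpa [Fin.le_def] using hj)
  have hhead : ((univ.filter fun j : Fin p => (j : ℕ) < k).card : ℝ) ≤ k := by
    exact_mod_cast Fin.card_filter_val_lt.trans_le (min_le_right _ _)
  have htop : ((univ.filter fun j : Fin p => (j : ℕ) < m + k).card : ℝ) ≤ m + k := by
    exact_mod_cast Fin.card_filter_val_lt.trans_le (min_le_right _ _)
  have hcompl :
      (univ.filter fun j : Fin p => (j : ℕ) < k)ᶜ = univ.filter fun j : Fin p => k ≤ (j : ℕ) := by
    ext j
    simp
  rw [hcompl] at htrace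
  have hdecay := rpow_neg_le_mul_pow_of_rpow_le (m := m) hρ0 hq (hk ▸ Nat.le_ceil _)
  have hvar :
      (ρ * μ₀)⁻¹ * ∑ j ∈ univ.filter (fun j : Fin p => k ≤ (j : ℕ)), lam j ≤ C * C₀ * k := calc
    _ ≤ (ρ * μ₀)⁻¹ * (C * (ρ * (k : ℝ) ^ (2 * m + 1))) := by
        gcongr
        exact htail.trans (by gcongr)
    _ = C * (k : ℝ) ^ (2 * m) * k / μ₀ := by
        field_simp
        ring
    _ ≤ C * (C₀ * μ₀) * k / μ₀ := by gcongr
    _ = C * C₀ * k := by field_simp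
  linarith
end

section
/- Let p ≥ 1 and let S be a symmetric positive semidefinite real p×p matrix with eigenvalues λ₁ ≥ λ₂ ≥ … ≥ λ_p ≥ 0, and let A be a symmetric positive definite real p×p matrix with eigenvalues 0 < μ₁ ≤ μ₂ ≤ … ≤ μ_p (each counted with multiplicity). Then for every ρ > 0 and all integers k ≥ 0, l ≥ 0 with k + l < p: Tr[ (S + ρ·A)⁻¹ · S ] ≤ l + 2·k + (1/(ρ·μ_{k+l+1}))·Σ_{j=k+1}^p λ_j. -/
/-!
Put `M = S + ρA` and take a symmetric `B` with `B M B = 1` (e.g. `B = M^{-1/2}`). Then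
`Tr(M⁻¹ S) = ∑ λᵢ ‖B uᵢ‖²`, and `x ↦ ∑ λᵢ ⟪B uᵢ, x⟫²` is the quadratic form of
`B S B ≤ B M B = 1`. Project the vectors `B uᵢ` onto
`W = span {B uᵢ | i < k} + span {B vⱼ | j < k + l}`, of dimension at most `2k + l`: the projected
parts contribute at most `dim W`, and the residuals `zᵢ` vanish for `i < k`. For the others,
`y = B zᵢ` is orthogonal to `v₁, …, v_{k+l}`, so `ρ μ_{k+l+1} ‖y‖² ≤ yᵀ M y = ‖zᵢ‖²`, while
`‖zᵢ‖² = ⟪uᵢ, y⟫ ≤ ‖y‖`; hence `‖zᵢ‖² ≤ 1 / (ρ μ_{k+l+1})`.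
-/

open Matrix

open scoped RealInnerProductSpace

lemma le_one_div_of_sq_le_of_mul_le {a b κ : ℝ} (hκ : 0 < κ) (hab : a ^ 2 ≤ b)
    (hba : κ * b ≤ a) : a ≤ 1 / κ := by
  rw [le_div_iff₀ hκ]
  rcases le_or_gt a 0 with ha | ha
  · nlinarith
  · nlinarith

lemma Finset.sum_mul_le_mul_sum_filter {ι : Type*} [Fintype ι] (P : ι → Prop) [DecidablePred P]
    {lam f : ι → ℝ} {C : ℝ} (hlam : ∀ i, 0 ≤ lam i) (hf : ∀ i, f i ≤ C)
    (hP : ∀ i, ¬ P i → f i = 0) :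
    ∑ i, lam i * f i ≤ C * ∑ i ∈ univ.filter P, lam i := by
  rw [Finset.mul_sum, Finset.sum_filter]
  refine Finset.sum_le_sum fun i _ => ?_
  split_ifs with h
  · rw [mul_comm C]; exact mul_le_mul_of_nonneg_left (hf i) (hlam i)
  · rw [hP i h, mul_zero]

namespace Matrix

variable {n : Type*} [Fintype n] [DecidableEq n]

lemma dotProduct_mulVec_mul_diagonal_mul_transpose (U : Matrix n n ℝ) (d y : n → ℝ) :
    y ⬝ᵥ (U * diagonal d * Uᵀ) *ᵥ y = ∑ i, d i * (Uᵀ *ᵥ y) i ^ 2 := by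
  rw [← mulVec_mulVec, ← mulVec_mulVec, dotProduct_mulVec, ← mulVec_transpose]
  simp only [dotProduct, mulVec_diagonal]
  exact Finset.sum_congr rfl fun i _ => by ring

lemma trace_mul_diagonal_mul_transpose (C : Matrix n n ℝ) (d : n → ℝ) :
    (C * diagonal d * Cᵀ).trace = ∑ i, d i * Cᵀ i ⬝ᵥ Cᵀ i := by
  rw [trace_mul_comm, ← mul_assoc]
  simp only [trace, diag, mul_diagonal]
  exact Finset.sum_congr rfl fun i _ => by rw [mul_comm]; rfl

lemma trace_mul_self_mul_mul_diagonal_mul_transpose {B : Matrix n n ℝ} (hB : B.IsSymm)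
    (U : Matrix n n ℝ) (d : n → ℝ) :
    (B * B * (U * diagonal d * Uᵀ)).trace = ∑ i, d i * (B *ᵥ Uᵀ i) ⬝ᵥ (B *ᵥ Uᵀ i) := by
  have hconj : (B * B * (U * diagonal d * Uᵀ)).trace =
      ((B * U) * diagonal d * (B * U)ᵀ).trace := by
    rw [transpose_mul, hB.eq, mul_assoc, trace_mul_comm]
    simp only [mul_assoc]
  rw [hconj, trace_mul_diagonal_mul_transpose]
  rfl

lemma mulVec_transpose_dotProduct_self {V : Matrix n n ℝ} (hV : V ∈ orthogonalGroup n ℝ)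
    (y : n → ℝ) : (Vᵀ *ᵥ y) ⬝ᵥ (Vᵀ *ᵥ y) = y ⬝ᵥ y := by
  rw [dotProduct_mulVec, ← mulVec_transpose, transpose_transpose, mulVec_mulVec,
    (mem_orthogonalGroup_iff n ℝ).mp hV, one_mulVec]

lemma sq_mulVec_transpose_apply_le {V : Matrix n n ℝ} (hV : V ∈ orthogonalGroup n ℝ)
    (y : n → ℝ) (i : n) : (Vᵀ *ᵥ y) i ^ 2 ≤ y ⬝ᵥ y := by
  rw [← mulVec_transpose_dotProduct_self hV, dotProduct, sq]
  exact Finset.single_le_sum (f := fun j => (Vᵀ *ᵥ y) j * (Vᵀ *ᵥ y) j)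
    (fun j _ => mul_self_nonneg _) (Finset.mem_univ i)

lemma mul_dotProduct_self_le_dotProduct_mulVec [LinearOrder n] {V : Matrix n n ℝ}
    (hV : V ∈ orthogonalGroup n ℝ) {μ : n → ℝ} (hμ : Monotone μ) {y : n → ℝ} {j₀ : n}
    (hy : ∀ j < j₀, (Vᵀ *ᵥ y) j = 0) :
    μ j₀ * (y ⬝ᵥ y) ≤ y ⬝ᵥ (V * diagonal μ * Vᵀ) *ᵥ y := by
  rw [dotProduct_mulVec_mul_diagonal_mul_transpose, ← mulVec_transpose_dotProduct_self hV,
    dotProduct, Finset.mul_sum]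
  refine Finset.sum_le_sum fun j _ => ?_
  rcases lt_or_ge j j₀ with hj | hj
  · simp [hy j hj]
  · rw [← sq]
    exact mul_le_mul_of_nonneg_right (hμ hj) (sq_nonneg _)

open scoped MatrixOrder in
lemma PosDef.exists_isSymm_mul_mul_eq_one {M : Matrix n n ℝ} (hM : M.PosDef) :
    ∃ B : Matrix n n ℝ, B.IsSymm ∧ B * M * B = 1 := by
  set R := CFC.sqrt M
  have hRR : R * R = M := CFC.sqrt_mul_sqrt_self M hM.posSemidef.nonneg
  have hR : R.IsSymm := (CFC.sqrt_nonneg M).posSemidef.isHermitian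
  have hdet : IsUnit R.det := by
    rw [isUnit_iff_ne_zero]
    intro h0
    have := hM.det_pos
    rw [← hRR, det_mul, h0, mul_zero] at this
    exact this.false
  refine ⟨R⁻¹, by rw [IsSymm, transpose_nonsing_inv, hR.eq], ?_⟩
  rw [← hRR, ← mul_assoc, nonsing_inv_mul _ hdet, one_mul, mul_nonsing_inv _ hdet]

variable {B M : Matrix n n ℝ}

lemma inv_eq_mul_self_of_mul_mul_eq_one (h : B * M * B = 1) : M⁻¹ = B * B :=
  inv_eq_left_inv (by rw [mul_assoc, mul_eq_one_comm, h])

lemma dotProduct_mulVec_mulVec_of_mul_mul_eq_one (hB : B.IsSymm) (h : B * M * B = 1)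
    (x : n → ℝ) : (B *ᵥ x) ⬝ᵥ M *ᵥ (B *ᵥ x) = x ⬝ᵥ x :=
  calc (B *ᵥ x) ⬝ᵥ M *ᵥ (B *ᵥ x) = x ⬝ᵥ (B * M * B) *ᵥ x := by
        rw [← mulVec_mulVec, ← mulVec_mulVec, dotProduct_mulVec x B, ← mulVec_transpose, hB.eq]
    _ = x ⬝ᵥ x := by rw [h, one_mulVec]

end Matrix

theorem sum_mul_norm_sq_le_finrank_add {E ι : Type*} [NormedAddCommGroup E]
    [InnerProductSpace ℝ E] [Fintype ι] (W : Submodule ℝ E) [FiniteDimensional ℝ W]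
    (lam : ι → ℝ) (c : ι → E) (h : ∀ x, ∑ i, lam i * ⟪c i, x⟫ ^ 2 ≤ ‖x‖ ^ 2) :
    ∑ i, lam i * ‖c i‖ ^ 2 ≤
      Module.finrank ℝ W + ∑ i, lam i * ‖c i - W.starProjection (c i)‖ ^ 2 := by
  set b := stdOrthonormalBasis ℝ W
  have hproj : ∑ i, lam i * ‖W.starProjection (c i)‖ ^ 2 ≤ Module.finrank ℝ W :=
    calc ∑ i, lam i * ‖W.starProjection (c i)‖ ^ 2
        = ∑ m, ∑ i, lam i * ⟪c i, b m⟫ ^ 2 := by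
          simp_rw [Submodule.starProjection_apply, Submodule.norm_coe, ← b.sum_sq_inner_right,
            Submodule.inner_orthogonalProjectionOnto_eq_of_mem_left, real_inner_comm,
            Finset.mul_sum]
          exact Finset.sum_comm
      _ ≤ ∑ m, ‖(b m : E)‖ ^ 2 := Finset.sum_le_sum fun m _ => h _
      _ = Module.finrank ℝ W := by simp [Submodule.norm_coe, b.orthonormal.1 _]
  calc ∑ i, lam i * ‖c i‖ ^ 2
      = ∑ i, lam i * ‖W.starProjection (c i)‖ ^ 2 +
          ∑ i, lam i * ‖c i - W.starProjection (c i)‖ ^ 2 := by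
        simp_rw [← Finset.sum_add_distrib, ← mul_add, ← Submodule.starProjection_orthogonal_val,
          ← Submodule.norm_sq_eq_add_norm_sq_starProjection]
    _ ≤ _ := by gcongr

lemma Submodule.inner_sub_starProjection_self {E : Type*} [NormedAddCommGroup E]
    [InnerProductSpace ℝ E] (W : Submodule ℝ E) [W.HasOrthogonalProjection] (x : E) :
    ⟪x, x - W.starProjection x⟫ = ‖x - W.starProjection x‖ ^ 2 := by
  have h0 : ⟪W.starProjection x, x - W.starProjection x⟫ = 0 := by
    rw [real_inner_comm]
    exact W.starProjection_inner_eq_zero x _ (W.starProjection_apply_mem x)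
  rw [← real_inner_self_eq_norm_sq, inner_sub_left, h0, sub_zero]

namespace EuclideanSpace

variable {n : Type*} [Fintype n]

lemma real_inner_eq_dotProduct (x y : EuclideanSpace ℝ n) : ⟪x, y⟫ = x.ofLp ⬝ᵥ y.ofLp := by
  rw [inner_eq_star_dotProduct, star_trivial, dotProduct_comm]

lemma norm_sq_eq_dotProduct (x : EuclideanSpace ℝ n) : ‖x‖ ^ 2 = x.ofLp ⬝ᵥ x.ofLp := by
  rw [← real_inner_self_eq_norm_sq, real_inner_eq_dotProduct]

variable {B : Matrix n n ℝ}

lemma inner_toLp_mulVec (hB : B.IsSymm) (w : n → ℝ) (z : EuclideanSpace ℝ n) :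
    ⟪WithLp.toLp 2 (B *ᵥ w), z⟫ = w ⬝ᵥ B *ᵥ z.ofLp := by
  rw [real_inner_eq_dotProduct, dotProduct_mulVec, ← mulVec_transpose, hB.eq, dotProduct_comm]

end EuclideanSpace

section Whitening

variable {n : Type*} [Fintype n] [DecidableEq n] {S M B U : Matrix n n ℝ} {d : n → ℝ}

lemma trace_inv_mul_eq_sum_mul_norm_sq (hS : S = U * diagonal d * Uᵀ) (hB : B.IsSymm)
    (h : B * M * B = 1) :
    (M⁻¹ * S).trace = ∑ i, d i * ‖WithLp.toLp 2 (B *ᵥ Uᵀ i)‖ ^ 2 := by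
  rw [inv_eq_mul_self_of_mul_mul_eq_one h, hS, trace_mul_self_mul_mul_diagonal_mul_transpose hB]
  simp_rw [EuclideanSpace.norm_sq_eq_dotProduct]

lemma sum_mul_inner_sq_le_norm_sq (hS : S = U * diagonal d * Uᵀ) (hSM : (M - S).PosSemidef)
    (hB : B.IsSymm) (h : B * M * B = 1) (x : EuclideanSpace ℝ n) :
    ∑ i, d i * ⟪WithLp.toLp 2 (B *ᵥ Uᵀ i), x⟫ ^ 2 ≤ ‖x‖ ^ 2 := by
  have hle := hSM.dotProduct_mulVec_nonneg (B *ᵥ x.ofLp)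
  rw [star_trivial, sub_mulVec, dotProduct_sub, sub_nonneg,
    dotProduct_mulVec_mulVec_of_mul_mul_eq_one hB h, hS,
    dotProduct_mulVec_mul_diagonal_mul_transpose] at hle
  simp_rw [EuclideanSpace.inner_toLp_mulVec hB, EuclideanSpace.norm_sq_eq_dotProduct]
  exact hle

lemma mul_dotProduct_le_norm_sq_of_inner_eq_zero [LinearOrder n] {V : Matrix n n ℝ}
    {μ : n → ℝ} {ρ : ℝ} (hS : S.PosSemidef) (hV : V ∈ orthogonalGroup n ℝ) (hμ : Monotone μ)
    (hρ : 0 ≤ ρ) (hB : B.IsSymm) (h : B * (S + ρ • (V * diagonal μ * Vᵀ)) * B = 1) {j₀ : n}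
    {z : EuclideanSpace ℝ n} (hz : ∀ j < j₀, ⟪WithLp.toLp 2 (B *ᵥ Vᵀ j), z⟫ = 0) :
    ρ * μ j₀ * ((B *ᵥ z.ofLp) ⬝ᵥ (B *ᵥ z.ofLp)) ≤ ‖z‖ ^ 2 := by
  set y := B *ᵥ z.ofLp
  have hRayleigh := mul_dotProduct_self_le_dotProduct_mulVec hV hμ (y := y) (j₀ := j₀)
    fun j hj => by rw [← hz j hj, EuclideanSpace.inner_toLp_mulVec hB]; rfl
  have hSy := hS.dotProduct_mulVec_nonneg y
  rw [star_trivial] at hSy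
  have hz_sq : ‖z‖ ^ 2 = y ⬝ᵥ (S + ρ • (V * diagonal μ * Vᵀ)) *ᵥ y := by
    rw [EuclideanSpace.norm_sq_eq_dotProduct, dotProduct_mulVec_mulVec_of_mul_mul_eq_one hB h]
  rw [hz_sq, add_mulVec, dotProduct_add, smul_mulVec, dotProduct_smul, smul_eq_mul, mul_assoc]
  linarith [mul_le_mul_of_nonneg_left hRayleigh hρ]

lemma norm_sq_sub_starProjection_le [LinearOrder n] {V : Matrix n n ℝ} {μ : n → ℝ} {ρ : ℝ}
    (hS : S.PosSemidef) (hU : U ∈ orthogonalGroup n ℝ) (hV : V ∈ orthogonalGroup n ℝ)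
    (hμ : Monotone μ) (hB : B.IsSymm) (h : B * (S + ρ • (V * diagonal μ * Vᵀ)) * B = 1)
    {j₀ : n} (hρ : 0 ≤ ρ) (hρμ : 0 < ρ * μ j₀) (W : Submodule ℝ (EuclideanSpace ℝ n))
    (hW : ∀ j < j₀, WithLp.toLp 2 (B *ᵥ Vᵀ j) ∈ W) (i : n) :
    ‖WithLp.toLp 2 (B *ᵥ Uᵀ i) - W.starProjection (WithLp.toLp 2 (B *ᵥ Uᵀ i))‖ ^ 2 ≤
      1 / (ρ * μ j₀) := by
  refine le_one_div_of_sq_le_of_mul_le hρμ ?_ <|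
    mul_dotProduct_le_norm_sq_of_inner_eq_zero hS hV hμ hρ hB h fun j hj => ?_
  · rw [← W.inner_sub_starProjection_self, EuclideanSpace.inner_toLp_mulVec hB]
    exact sq_mulVec_transpose_apply_le hU _ i
  · rw [real_inner_comm]
    exact W.starProjection_inner_eq_zero _ _ (hW j hj)

end Whitening

theorem stmt3_general {p : ℕ}
    (S A : Matrix (Fin p) (Fin p) ℝ) (hS : S.PosSemidef) (hA : A.PosDef)
    (lam : Fin p → ℝ) (hlam_nonneg : ∀ j, 0 ≤ lam j)
    (U : Matrix (Fin p) (Fin p) ℝ) (hU : U ∈ Matrix.orthogonalGroup (Fin p) ℝ)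
    (hSdiag : S = U * Matrix.diagonal lam * Uᵀ)
    (μ : Fin p → ℝ) (hμ_mono : Monotone μ) (hμ_pos : ∀ j, 0 < μ j)
    (V : Matrix (Fin p) (Fin p) ℝ) (hV : V ∈ Matrix.orthogonalGroup (Fin p) ℝ)
    (hAdiag : A = V * Matrix.diagonal μ * Vᵀ)
    (ρ : ℝ) (hρ : 0 < ρ) (k l : ℕ) (hkl : k + l < p) :
    ((S + ρ • A)⁻¹ * S).trace ≤ (l : ℝ) + 2 * (k : ℝ) +
      (1 / (ρ * μ ⟨k + l, hkl⟩)) *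
        ∑ j ∈ Finset.univ.filter (fun j : Fin p => k ≤ (j : ℕ)), lam j := by
  obtain ⟨B, hB, hBMB⟩ := (PosDef.posSemidef_add hS (hA.smul hρ)).exists_isSymm_mul_mul_eq_one
  set c : Fin p → EuclideanSpace ℝ (Fin p) := fun i => WithLp.toLp 2 (B *ᵥ Uᵀ i)
  set v : Fin p → EuclideanSpace ℝ (Fin p) := fun j => WithLp.toLp 2 (B *ᵥ Vᵀ j)
  set g := Sum.elim (c ∘ Fin.castLE (by omega : k ≤ p)) (v ∘ Fin.castLE hkl.le)
  set W := Submodule.span ℝ (Set.range g)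
  have hrank : (Module.finrank ℝ W : ℝ) ≤ 2 * k + l := by
    have := finrank_range_le_card (R := ℝ) g
    simp only [Fintype.card_sum, Fintype.card_fin] at this
    exact_mod_cast this.trans (by omega)
  have hhead : ∀ i : Fin p, ¬ k ≤ (i : ℕ) → ‖c i - W.starProjection (c i)‖ ^ 2 = 0 := by
    intro i hi
    have hmem : c i ∈ W := Submodule.subset_span ⟨Sum.inl ⟨i, by omega⟩, rfl⟩
    rw [W.starProjection_eq_self_iff.mpr hmem, sub_self, norm_zero, sq, mul_zero]
  have hSM : (S + ρ • A - S).PosSemidef := by simpa using hA.posSemidef.smul hρ.le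
  calc ((S + ρ • A)⁻¹ * S).trace = ∑ i, lam i * ‖c i‖ ^ 2 :=
        trace_inv_mul_eq_sum_mul_norm_sq hSdiag hB hBMB
    _ ≤ Module.finrank ℝ W + ∑ i, lam i * ‖c i - W.starProjection (c i)‖ ^ 2 :=
        sum_mul_norm_sq_le_finrank_add W lam c (sum_mul_inner_sq_le_norm_sq hSdiag hSM hB hBMB)
    _ ≤ (2 * k + l) + 1 / (ρ * μ ⟨k + l, hkl⟩) *
          ∑ j ∈ Finset.univ.filter (fun j : Fin p => k ≤ (j : ℕ)), lam j := by
        refine add_le_add hrank (Finset.sum_mul_le_mul_sum_filter _ hlam_nonneg ?_ hhead)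
        exact norm_sq_sub_starProjection_le hS hU hV hμ_mono hB (hAdiag ▸ hBMB)
          hρ.le (mul_pos hρ (hμ_pos _)) W fun j hj =>
            Submodule.subset_span ⟨Sum.inr ⟨j, hj⟩, rfl⟩
    _ = _ := by ring

/-- General trace inequality from the chain (6.1)–(6.4) in the proof of
Theorem 1: `Tr[(S + ρA)⁻¹ S] ≤ l + 2k + (1/(ρ μ_{k+l+1})) Σ_{j=k+1}^p λ_j`,
where `λ₁ ≥ … ≥ λ_p ≥ 0` are the eigenvalues of `S` and
`0 < μ₁ ≤ … ≤ μ_p` those of `A`. -/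
theorem stmt3 {p : ℕ} (hp : 1 ≤ p)
    (S A : Matrix (Fin p) (Fin p) ℝ) (hS : S.PosSemidef) (hA : A.PosDef)
    (lam : Fin p → ℝ) (hlam_anti : Antitone lam) (hlam_nonneg : ∀ j, 0 ≤ lam j)
    (U : Matrix (Fin p) (Fin p) ℝ) (hU : U ∈ Matrix.orthogonalGroup (Fin p) ℝ)
    (hSdiag : S = U * Matrix.diagonal lam * Uᵀ)
    (μ : Fin p → ℝ) (hμ_mono : Monotone μ) (hμ_pos : ∀ j, 0 < μ j)
    (V : Matrix (Fin p) (Fin p) ℝ) (hV : V ∈ Matrix.orthogonalGroup (Fin p) ℝ)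
    (hAdiag : A = V * Matrix.diagonal μ * Vᵀ)
    (ρ : ℝ) (hρ : 0 < ρ) (k l : ℕ) (hkl : k + l < p) :
    ((S + ρ • A)⁻¹ * S).trace ≤ (l : ℝ) + 2 * (k : ℝ) +
      (1 / (ρ * μ ⟨k + l, hkl⟩)) *
        ∑ j ∈ Finset.univ.filter (fun j : Fin p => k ≤ (j : ℕ)), lam j :=
  stmt3_general S A hS hA lam hlam_nonneg U hU hSdiag μ hμ_mono hμ_pos V hV hAdiag ρ hρ k l hkl
end

section
/- Let p ≥ 1, let S be a symmetric positive semidefinite real p×p matrix, let A be a symmetric positive definite real p×p matrix with smallest eigenvalue μ₁ > 0, and let ρ > 0. Then for every v ∈ ℝ^p, vᵀ·(S + ρ·A)⁻¹·S·(S + ρ·A)⁻¹·v ≤ (1/(ρ·μ₁))·vᵀ·v. -/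
open Matrix

/-! With `M = S + ρA` and `w = M⁻¹v`, the quadratic form to bound is `wᵀSw ≤ wᵀMw = wᵀv`,
while coercivity gives `ρμ₁ wᵀw ≤ wᵀMw = wᵀv`. Expanding `0 ≤ |ρμ₁ w - v|²` turns the second
inequality into `ρμ₁ wᵀv ≤ vᵀv`, which is the bound. -/

namespace Matrix

variable {n : Type*} [Fintype n]

theorem mul_dotProduct_le_dotProduct_self {c : ℝ} (hc : 0 ≤ c) {w v : n → ℝ}
    (h : c * (w ⬝ᵥ w) ≤ w ⬝ᵥ v) : c * (w ⬝ᵥ v) ≤ v ⬝ᵥ v := by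
  have hsq : 0 ≤ (c • w - v) ⬝ᵥ (c • w - v) := by
    simpa using dotProduct_star_self_nonneg (c • w - v)
  have hexpand : (c • w - v) ⬝ᵥ (c • w - v) = c * (c * (w ⬝ᵥ w)) - 2 * c * (w ⬝ᵥ v) + v ⬝ᵥ v := by
    simp only [sub_dotProduct, dotProduct_sub, smul_dotProduct, dotProduct_smul, smul_eq_mul,
      dotProduct_comm v w]
    ring
  nlinarith [mul_le_mul_of_nonneg_left h hc]

variable [DecidableEq n] {R : Type*} [CommRing R]

theorem dotProduct_mulVec_inv_mul_mul_inv {M : Matrix n n R} (hM : M.IsSymm) (S : Matrix n n R)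
    (v : n → R) : v ⬝ᵥ (M⁻¹ * S * M⁻¹) *ᵥ v = (M⁻¹ *ᵥ v) ⬝ᵥ S *ᵥ (M⁻¹ *ᵥ v) := by
  rw [← mulVec_mulVec, ← mulVec_mulVec, dotProduct_mulVec v M⁻¹, ← mulVec_transpose,
    transpose_nonsing_inv, hM.eq]

theorem dotProduct_mulVec_inv_mul_mul_inv_le {S M : Matrix n n ℝ} (hM : M.IsSymm)
    (hMunit : IsUnit M) (hSM : ∀ w, w ⬝ᵥ S *ᵥ w ≤ w ⬝ᵥ M *ᵥ w) {c : ℝ} (hc : 0 < c)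
    (hcM : ∀ w, c * (w ⬝ᵥ w) ≤ w ⬝ᵥ M *ᵥ w) (v : n → ℝ) :
    v ⬝ᵥ (M⁻¹ * S * M⁻¹) *ᵥ v ≤ 1 / c * (v ⬝ᵥ v) := by
  set w := M⁻¹ *ᵥ v
  have hMw : M *ᵥ w = v := by
    rw [mulVec_mulVec, mul_nonsing_inv M ((isUnit_iff_isUnit_det M).mp hMunit), one_mulVec]
  have hcw : c * (w ⬝ᵥ v) ≤ v ⬝ᵥ v :=
    mul_dotProduct_le_dotProduct_self hc.le (hMw ▸ hcM w)
  calc v ⬝ᵥ (M⁻¹ * S * M⁻¹) *ᵥ v = w ⬝ᵥ S *ᵥ w := dotProduct_mulVec_inv_mul_mul_inv hM S v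
    _ ≤ w ⬝ᵥ v := hMw ▸ hSM w
    _ ≤ 1 / c * (v ⬝ᵥ v) := by rw [one_div_mul_eq_div, le_div_iff₀ hc]; linarith

end Matrix

theorem stmt13_general {p : ℕ}
    (S A : Matrix (Fin p) (Fin p) ℝ) (hS : S.PosSemidef) (hA : A.PosDef)
    (μ₁ : ℝ) (hμ₁ : 0 < μ₁)
    (hmuA : ∀ v : Fin p → ℝ, μ₁ * (v ⬝ᵥ v) ≤ v ⬝ᵥ A.mulVec v)
    (ρ : ℝ) (hρ : 0 < ρ) :
    ∀ v : Fin p → ℝ,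
      v ⬝ᵥ ((S + ρ • A)⁻¹ * S * (S + ρ • A)⁻¹).mulVec v ≤
        (1 / (ρ * μ₁)) * (v ⬝ᵥ v) := by
  have hM : (S + ρ • A).PosDef := PosDef.posSemidef_add hS (hA.smul hρ)
  have hquad : ∀ w, w ⬝ᵥ (S + ρ • A) *ᵥ w = w ⬝ᵥ S *ᵥ w + ρ * (w ⬝ᵥ A *ᵥ w) := fun w => by
    rw [add_mulVec, dotProduct_add, smul_mulVec, dotProduct_smul, smul_eq_mul]
  have hS_nonneg : ∀ w, 0 ≤ w ⬝ᵥ S *ᵥ w := fun w => by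
    simpa using hS.dotProduct_mulVec_nonneg w
  have hA_nonneg : ∀ w, 0 ≤ w ⬝ᵥ A *ᵥ w := fun w => by
    simpa using hA.posSemidef.dotProduct_mulVec_nonneg w
  refine dotProduct_mulVec_inv_mul_mul_inv_le (isHermitian_iff_isSymm.mp hM.isHermitian) hM.isUnit (fun w => ?_)
    (mul_pos hρ hμ₁) (fun w => ?_)
  · rw [hquad]
    nlinarith [hA_nonneg w]
  · rw [hquad, mul_assoc]
    nlinarith [hS_nonneg w, hmuA w]

/-- Bound on the second term of decomposition (6.6) in the proof of
Theorem 2: if `μ₁ > 0` is the smallest eigenvalue of `A` (so that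
`μ₁ vᵀv ≤ vᵀAv` for all `v`), then
`vᵀ (S + ρA)⁻¹ S (S + ρA)⁻¹ v ≤ (1/(ρ μ₁)) vᵀ v`. -/
theorem stmt13 {p : ℕ} (hp : 1 ≤ p)
    (S A : Matrix (Fin p) (Fin p) ℝ) (hS : S.PosSemidef) (hA : A.PosDef)
    (μ₁ : ℝ) (hμ₁ : 0 < μ₁)
    (hmuA : ∀ v : Fin p → ℝ, μ₁ * (v ⬝ᵥ v) ≤ v ⬝ᵥ A.mulVec v)
    (ρ : ℝ) (hρ : 0 < ρ) :
    ∀ v : Fin p → ℝ,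
      v ⬝ᵥ ((S + ρ • A)⁻¹ * S * (S + ρ • A)⁻¹).mulVec v ≤
        (1 / (ρ * μ₁)) * (v ⬝ᵥ v) :=
  stmt13_general S A hS hA μ₁ hμ₁ hmuA ρ hρ
end

section
/- Let p ≥ 1, let S be a symmetric positive semidefinite real p×p matrix, let A be a symmetric positive definite real p×p matrix, and let ρ > 0. Then Tr[ (S + ρ·A)⁻¹·S·(S + ρ·A)⁻¹ ] ≤ Tr[ (ρ·A)⁻¹ ]. -/
/-! With `B = S + ρA` and `C = ρA`, the gap `C⁻¹ - B⁻¹ S B⁻¹` equals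
`(B⁻¹ - C⁻¹) C (B⁻¹ - C⁻¹) + B⁻¹`, a congruence of `C` plus `B⁻¹`; so it is positive
semidefinite and has nonnegative trace. -/

open Matrix

namespace Matrix

variable {n K : Type*} [Fintype n] [DecidableEq n] [Field K]

lemma inv_sub_inv_mul_sub_mul_inv {B C : Matrix n n K} (hB : IsUnit B) (hC : IsUnit C) :
    C⁻¹ - B⁻¹ * (B - C) * B⁻¹ = (B⁻¹ - C⁻¹) * C * (B⁻¹ - C⁻¹) + B⁻¹ := by
  have := hB.invertible
  have := hC.invertible
  simp only [Matrix.mul_sub, Matrix.sub_mul, inv_mul_of_invertible, Matrix.one_mul,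
    mul_inv_cancel_right_of_invertible]
  abel

variable [PartialOrder K] [StarRing K] [StarOrderedRing K]

lemma PosDef.posSemidef_inv_sub_inv_add_mul_mul_inv_add {S C : Matrix n n K}
    (hS : S.PosSemidef) (hC : C.PosDef) :
    (C⁻¹ - (S + C)⁻¹ * S * (S + C)⁻¹).PosSemidef := by
  have hSC : (S + C).PosDef := hC.posSemidef_add hS
  have hgap := inv_sub_inv_mul_sub_mul_inv hSC.isUnit hC.isUnit
  rw [add_sub_cancel_right] at hgap
  rw [hgap]
  refine PosSemidef.add ?_ hSC.inv.posSemidef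
  simpa only [(hSC.inv.isHermitian.sub hC.inv.isHermitian).eq] using
    hC.posSemidef.conjTranspose_mul_mul_same ((S + C)⁻¹ - C⁻¹)

end Matrix

theorem stmt14_general {p : ℕ}
    (S A : Matrix (Fin p) (Fin p) ℝ) (hS : S.PosSemidef) (hA : A.PosDef)
    (ρ : ℝ) (hρ : 0 < ρ) :
    ((S + ρ • A)⁻¹ * S * (S + ρ • A)⁻¹).trace ≤ ((ρ • A)⁻¹).trace := by
  have hLoewner := (hA.smul hρ).posSemidef_inv_sub_inv_add_mul_mul_inv_add hS
  simpa only [trace_sub, sub_nonneg] using hLoewner.trace_nonneg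

/-- Bound on the noise term of decomposition (6.6) in the proof of
Theorem 2: `Tr[(S + ρA)⁻¹ S (S + ρA)⁻¹] ≤ Tr[(ρA)⁻¹]`. -/
theorem stmt14 {p : ℕ} (hp : 1 ≤ p)
    (S A : Matrix (Fin p) (Fin p) ℝ) (hS : S.PosSemidef) (hA : A.PosDef)
    (ρ : ℝ) (hρ : 0 < ρ) :
    ((S + ρ • A)⁻¹ * S * (S + ρ • A)⁻¹).trace ≤ ((ρ • A)⁻¹).trace :=
  stmt14_general S A hS hA ρ hρ
end

section
/- Let H be a real separable Hilbert space, (Ω, 𝒜, ℙ) a probability space, and X : Ω → H a strongly measurable map with ∫ ‖X(ω)‖² dℙ(ω) < ∞. Let (ζ_r)_{r∈ℕ} be a Hilbert basis of H and (λ_r)_{r∈ℕ} a nonincreasing sequence of nonnegative reals such that ∫ ⟨X, ζ_r⟩·⟨X, ζ_s⟩ dℙ = λ_r if r = s and = 0 if r ≠ s, for all r, s ∈ ℕ. Then for every integer k ≥ 0 and every k-dimensional linear subspace L of H, with P_L the orthogonal projection of H onto L: Σ_{r ≥ k} λ_r ≤ ∫ ‖X(ω) − P_L(X(ω))‖² dℙ(ω).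 Moreover Σ_{r ≥ k} λ_r = ∫ ‖X(ω) − Σ_{s < k} ⟨X(ω), ζ_s⟩·ζ_s‖² dℙ(ω). -/
/-!
Put `B v = E ⟪X, v⟫²`. Since `B` is continuous and the partial sums of the expansion of `v` in
the basis `ζ` converge to `v`, the covariance relations give `B v = ∑ λ_r ⟪v, ζ_r⟫²`, while
Parseval's identity gives `E ‖X‖² = ∑ λ_r`. For an orthonormal basis `u_1, …, u_k` of `L`,
`E ‖X - P_L X‖² = E ‖X‖² - ∑_j B u_j = ∑ λ_r (1 - t_r)` with weights
`t_r = ∑_j ⟪u_j, ζ_r⟫² ∈ [0, 1]` of total mass `k`. As `λ` is nonincreasing, such weights give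
`∑ λ_r t_r ≤ ∑_{r < k} λ_r`, and the choice `u_j = ζ_j` attains this bound.
-/

open MeasureTheory Filter Topology
open scoped RealInnerProductSpace

theorem Orthonormal.norm_sub_sum_inner_smul_sq {H ι : Type*} [NormedAddCommGroup H]
    [InnerProductSpace ℝ H] {v : ι → H} (hv : Orthonormal ℝ v) (s : Finset ι) (x : H) :
    ‖x - ∑ i ∈ s, ⟪x, v i⟫ • v i‖ ^ 2 = ‖x‖ ^ 2 - ∑ i ∈ s, ⟪x, v i⟫ ^ 2 := by
  have hx : ⟪x, ∑ i ∈ s, ⟪x, v i⟫ • v i⟫ = ∑ i ∈ s, ⟪x, v i⟫ ^ 2 := by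
    simp only [inner_sum, real_inner_smul_right, sq]
  have hp : ‖∑ i ∈ s, ⟪x, v i⟫ • v i‖ ^ 2 = ∑ i ∈ s, ⟪x, v i⟫ ^ 2 := by
    rw [← real_inner_self_eq_norm_sq, hv.inner_sum]
    simp only [conj_trivial, sq]
  rw [norm_sub_sq_real, hx, hp]
  ring

theorem HilbertBasis.hasSum_inner_sq {H ι : Type*} [NormedAddCommGroup H]
    [InnerProductSpace ℝ H] (ζ : HilbertBasis ι ℝ H) (x : H) :
    HasSum (fun i => ⟪x, ζ i⟫ ^ 2) (‖x‖ ^ 2) := by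
  simpa only [real_inner_comm x, ← sq, real_inner_self_eq_norm_sq] using
    ζ.hasSum_inner_mul_inner x x

theorem tsum_mul_le_sum_range_of_antitone {lam t : ℕ → ℝ} (hanti : Antitone lam)
    (ht0 : ∀ r, 0 ≤ t r) (ht1 : ∀ r, t r ≤ 1) {k : ℕ} (ht : HasSum t k)
    (hlt : Summable fun r => lam r * t r) :
    ∑' r, lam r * t r ≤ ∑ r ∈ Finset.range k, lam r := by
  have htail : HasSum (fun i => t (i + k)) (k - ∑ r ∈ Finset.range k, t r) :=
    (hasSum_nat_add_iff' k).2 ht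
  have hmass : ∑' i, lam (i + k) * t (i + k) ≤ lam k * (k - ∑ r ∈ Finset.range k, t r) := by
    rw [← htail.tsum_eq, ← tsum_mul_left]
    exact ((summable_nat_add_iff k).2 hlt).tsum_le_tsum
      (fun i => mul_le_mul_of_nonneg_right (hanti le_add_self) (ht0 _)) (htail.summable.mul_left _)
  have hhead : lam k * (k - ∑ r ∈ Finset.range k, t r) ≤
      ∑ r ∈ Finset.range k, lam r * (1 - t r) := by
    calc lam k * (k - ∑ r ∈ Finset.range k, t r) = ∑ r ∈ Finset.range k, lam k * (1 - t r) := by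
          simp [← Finset.mul_sum, Finset.sum_sub_distrib]
      _ ≤ ∑ r ∈ Finset.range k, lam r * (1 - t r) :=
          Finset.sum_le_sum fun r hr => mul_le_mul_of_nonneg_right
            (hanti (Finset.mem_range.1 hr).le) (sub_nonneg.2 (ht1 r))
  have hsplit := hlt.sum_add_tsum_nat_add k
  simp only [mul_sub, mul_one, Finset.sum_sub_distrib] at hhead
  linarith

theorem MeasureTheory.MemLp.integrable_norm_sq {E Ω : Type*} [NormedAddCommGroup E]
    [MeasurableSpace Ω] {P : Measure Ω} {X : Ω → E} (hX : MemLp X 2 P) :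
    Integrable (fun ω => ‖X ω‖ ^ 2) P :=
  (memLp_two_iff_integrable_sq_norm hX.1).1 hX

section SquareIntegrable

variable {H : Type*} [NormedAddCommGroup H] [InnerProductSpace ℝ H]
  {Ω : Type*} [MeasurableSpace Ω] {P : Measure Ω} {X : Ω → H}

theorem MeasureTheory.MemLp.integrable_inner_mul_inner (hX : MemLp X 2 P) (v w : H) :
    Integrable (fun ω => ⟪X ω, v⟫ * ⟪X ω, w⟫) P :=
  (hX.inner_const v).integrable_mul (hX.inner_const w)

theorem MeasureTheory.MemLp.integrable_inner_sq (hX : MemLp X 2 P) (v : H) :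
    Integrable (fun ω => ⟪X ω, v⟫ ^ 2) P :=
  (hX.inner_const v).integrable_sq

theorem integral_norm_sub_sum_inner_smul_sq (hX : MemLp X 2 P) {ι : Type*} {v : ι → H}
    (hv : Orthonormal ℝ v) (s : Finset ι) :
    ∫ ω, ‖X ω - ∑ i ∈ s, ⟪X ω, v i⟫ • v i‖ ^ 2 ∂P =
      ∫ ω, ‖X ω‖ ^ 2 ∂P - ∑ i ∈ s, ∫ ω, ⟪X ω, v i⟫ ^ 2 ∂P := by
  simp_rw [hv.norm_sub_sum_inner_smul_sq]
  rw [integral_sub hX.integrable_norm_sq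
      (integrable_finsetSum _ fun i _ => hX.integrable_inner_sq (v i)),
    integral_finsetSum _ fun i _ => hX.integrable_inner_sq (v i)]

theorem HilbertBasis.hasSum_integral_inner_sq {ι : Type*} [Countable ι]
    (ζ : HilbertBasis ι ℝ H) (hX : MemLp X 2 P) :
    HasSum (fun i => ∫ ω, ⟪X ω, ζ i⟫ ^ 2 ∂P) (∫ ω, ‖X ω‖ ^ 2 ∂P) := by
  refine hasSum_integral_of_dominated_convergence (fun i ω => ⟪X ω, ζ i⟫ ^ 2)
    (fun i => (hX.integrable_inner_sq (ζ i)).aestronglyMeasurable)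
    (fun i => ae_of_all _ fun ω => by simp) (ae_of_all _ fun ω => (ζ.hasSum_inner_sq _).summable)
    ?_ (ae_of_all _ fun ω => ζ.hasSum_inner_sq (X ω))
  simpa only [fun ω => (ζ.hasSum_inner_sq (X ω)).tsum_eq] using hX.integrable_norm_sq

theorem continuous_integral_inner_sq (hX : MemLp X 2 P) :
    Continuous fun v : H => ∫ ω, ⟪X ω, v⟫ ^ 2 ∂P := by
  refine continuous_iff_continuousAt.2 fun v => continuousAt_of_dominated
    (Eventually.of_forall fun w => (hX.integrable_inner_sq w).aestronglyMeasurable)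
    (bound := fun ω => (‖v‖ + 1) ^ 2 * ‖X ω‖ ^ 2) ?_
    (hX.integrable_norm_sq.const_mul _) (ae_of_all _ fun ω => by fun_prop)
  filter_upwards [Metric.ball_mem_nhds v one_pos] with w hw
  refine ae_of_all _ fun ω => ?_
  have hw' : ‖w‖ ≤ ‖v‖ + 1 := by
    have := norm_le_norm_add_norm_sub' w v
    rw [Metric.mem_ball, dist_eq_norm] at hw
    linarith
  calc ‖⟪X ω, w⟫ ^ 2‖ = |⟪X ω, w⟫| ^ 2 := by simp
    _ ≤ (‖X ω‖ * ‖w‖) ^ 2 := by gcongr; exact abs_real_inner_le_norm _ _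
    _ ≤ (‖v‖ + 1) ^ 2 * ‖X ω‖ ^ 2 := by rw [mul_pow, mul_comm]; gcongr

theorem integral_inner_sum_smul_sq {ι : Type*} [DecidableEq ι] {lam : ι → ℝ} {e : ι → H}
    (hX : MemLp X 2 P)
    (hcov : ∀ r s, ∫ ω, ⟪X ω, e r⟫ * ⟪X ω, e s⟫ ∂P = if r = s then lam r else 0)
    (s : Finset ι) (a : ι → ℝ) :
    ∫ ω, ⟪X ω, ∑ r ∈ s, a r • e r⟫ ^ 2 ∂P = ∑ r ∈ s, lam r * a r ^ 2 := by
  have hexpand : ∀ ω, ⟪X ω, ∑ r ∈ s, a r • e r⟫ ^ 2 =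
      ∑ r ∈ s, ∑ q ∈ s, a r * a q * (⟪X ω, e r⟫ * ⟪X ω, e q⟫) := fun ω => by
    simp only [inner_sum, real_inner_smul_right, sq, Finset.sum_mul_sum]
    exact Finset.sum_congr rfl fun r _ => Finset.sum_congr rfl fun q _ => by ring
  have hint : ∀ r q, Integrable (fun ω => a r * a q * (⟪X ω, e r⟫ * ⟪X ω, e q⟫)) P :=
    fun r q => (hX.integrable_inner_mul_inner _ _).const_mul _
  simp_rw [hexpand]
  rw [integral_finsetSum _ fun r _ => integrable_finsetSum _ fun q _ => hint r q]
  refine Finset.sum_congr rfl fun r hr => ?_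
  rw [integral_finsetSum _ fun q _ => hint r q]
  simp_rw [integral_const_mul, hcov, mul_ite, mul_zero]
  rw [Finset.sum_ite_eq s r, if_pos hr]
  ring

theorem HilbertBasis.hasSum_integral_inner_sq_of_covariance {ι : Type*} [DecidableEq ι]
    {lam : ι → ℝ} (ζ : HilbertBasis ι ℝ H) (hX : MemLp X 2 P)
    (hcov : ∀ r s, ∫ ω, ⟪X ω, ζ r⟫ * ⟪X ω, ζ s⟫ ∂P = if r = s then lam r else 0) (v : H) :
    HasSum (fun r => lam r * ⟪v, ζ r⟫ ^ 2) (∫ ω, ⟪X ω, v⟫ ^ 2 ∂P) := by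
  have hpartial := ((continuous_integral_inner_sq hX).tendsto v).comp (ζ.hasSum_repr v)
  refine hpartial.congr fun s => ?_
  simp only [Function.comp_apply, ζ.repr_apply_apply, integral_inner_sum_smul_sq hX hcov,
    real_inner_comm v]

theorem sum_integral_inner_sq_le_sum_range (ζ : HilbertBasis ℕ ℝ H) (hX : MemLp X 2 P)
    {lam : ℕ → ℝ} (hanti : Antitone lam)
    (hcov : ∀ r s, ∫ ω, ⟪X ω, ζ r⟫ * ⟪X ω, ζ s⟫ ∂P = if r = s then lam r else 0)
    {ι : Type*} [Fintype ι] {u : ι → H} (hu : Orthonormal ℝ u) :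
    ∑ j, ∫ ω, ⟪X ω, u j⟫ ^ 2 ∂P ≤ ∑ r ∈ Finset.range (Fintype.card ι), lam r := by
  set t : ℕ → ℝ := fun r => ∑ j, ⟪u j, ζ r⟫ ^ 2
  have ht : HasSum t (Fintype.card ι) := by
    simpa only [hu.1, one_pow, Finset.sum_const, Finset.card_univ, nsmul_eq_mul, mul_one] using
      hasSum_sum (s := Finset.univ) fun j _ => ζ.hasSum_inner_sq (u j)
  have hlt : HasSum (fun r => lam r * t r) (∑ j, ∫ ω, ⟪X ω, u j⟫ ^ 2 ∂P) := by
    simpa only [t, Finset.mul_sum] using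
      hasSum_sum fun j _ => ζ.hasSum_integral_inner_sq_of_covariance hX hcov (u j)
  have ht1 : ∀ r, t r ≤ 1 := fun r => by
    simpa [ζ.orthonormal.1 r] using hu.sum_inner_products_le (ζ r) (s := Finset.univ)
  rw [← hlt.tsum_eq]
  exact tsum_mul_le_sum_range_of_antitone hanti (fun r => by positivity) ht1 ht hlt.summable

end SquareIntegrable

theorem stmt16_general {H : Type*} [NormedAddCommGroup H] [InnerProductSpace ℝ H]
    {Ω : Type*} [MeasurableSpace Ω] (P : Measure Ω)
    (X : Ω → H) (hmeas : StronglyMeasurable X)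
    (hint : Integrable (fun ω => ‖X ω‖ ^ 2) P)
    (ζ : HilbertBasis ℕ ℝ H)
    (lam : ℕ → ℝ) (hanti : Antitone lam)
    (hcov : ∀ r s : ℕ,
      ∫ ω, (inner ℝ (X ω) (ζ r) : ℝ) * (inner ℝ (X ω) (ζ s) : ℝ) ∂P =
        if r = s then lam r else 0) :
    (∀ (k : ℕ) (L : Submodule ℝ H) [FiniteDimensional ℝ L],
      Module.finrank ℝ L = k →
        (∑' i : ℕ, lam (k + i)) ≤
          ∫ ω, ‖X ω - (L.orthogonalProjection (X ω) : H)‖ ^ 2 ∂P) ∧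
    (∀ k : ℕ,
      (∑' i : ℕ, lam (k + i)) =
        ∫ ω, ‖X ω - ∑ s ∈ Finset.range k, (inner ℝ (X ω) (ζ s) : ℝ) • (ζ s : H)‖ ^ 2 ∂P) := by
  have hX : MemLp X 2 P := (memLp_two_iff_integrable_sq_norm hmeas.aestronglyMeasurable).2 hint
  have hdiag : ∀ r, ∫ ω, ⟪X ω, ζ r⟫ ^ 2 ∂P = lam r := fun r => by simpa [sq] using hcov r r
  have hlam : HasSum lam (∫ ω, ‖X ω‖ ^ 2 ∂P) := by
    simpa only [hdiag] using ζ.hasSum_integral_inner_sq hX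
  have htail : ∀ k, ∑' i, lam (k + i) = ∫ ω, ‖X ω‖ ^ 2 ∂P - ∑ r ∈ Finset.range k, lam r :=
    fun k => by simpa only [add_comm k] using ((hasSum_nat_add_iff' k).2 hlam).tsum_eq
  refine ⟨fun k L _ hk => ?_, fun k => ?_⟩
  · subst hk
    set b := stdOrthonormalBasis ℝ L
    have hb : Orthonormal ℝ fun j => (b j : H) := b.orthonormal.comp_linearIsometry L.subtypeₗᵢ
    have hproj : ∀ x : H, (L.orthogonalProjectionOnto x : H) = ∑ j, ⟪x, b j⟫ • (b j : H) :=
      fun x => by simp [b.orthogonalProjectionOnto_apply_eq_sum, real_inner_comm]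
    have hbound := sum_integral_inner_sq_le_sum_range ζ hX hanti hcov hb
    rw [Fintype.card_fin] at hbound
    simp_rw [hproj, integral_norm_sub_sum_inner_smul_sq hX hb, htail]
    linarith
  · rw [integral_norm_sub_sum_inner_smul_sq hX ζ.orthonormal, htail]
    simp only [hdiag]

/-- Relation (6.11) in the proof of Theorem 3 (best-basis property of the
Karhunen–Loève expansion): if `E(⟨X,ζ_r⟩⟨X,ζ_s⟩) = λ_r δ_{rs}` for a Hilbert
basis `(ζ_r)` and nonincreasing nonnegative `(λ_r)`, then for every
`k`-dimensional subspace `L`, `Σ_{r≥k} λ_r ≤ E ‖X − P_L X‖²`, with equality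
for the span of `ζ_0, …, ζ_{k−1}`. -/
theorem stmt16 {H : Type*} [NormedAddCommGroup H] [InnerProductSpace ℝ H]
    [CompleteSpace H] [TopologicalSpace.SeparableSpace H]
    {Ω : Type*} [MeasurableSpace Ω] (P : Measure Ω) [IsProbabilityMeasure P]
    (X : Ω → H) (hmeas : StronglyMeasurable X)
    (hint : Integrable (fun ω => ‖X ω‖ ^ 2) P)
    (ζ : HilbertBasis ℕ ℝ H)
    (lam : ℕ → ℝ) (hanti : Antitone lam) (hnonneg : ∀ r, 0 ≤ lam r)
    (hcov : ∀ r s : ℕ,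
      ∫ ω, (inner ℝ (X ω) (ζ r) : ℝ) * (inner ℝ (X ω) (ζ s) : ℝ) ∂P =
        if r = s then lam r else 0) :
    (∀ (k : ℕ) (L : Submodule ℝ H) [FiniteDimensional ℝ L],
      Module.finrank ℝ L = k →
        (∑' i : ℕ, lam (k + i)) ≤
          ∫ ω, ‖X ω - (L.orthogonalProjection (X ω) : H)‖ ^ 2 ∂P) ∧
    (∀ k : ℕ,
      (∑' i : ℕ, lam (k + i)) =
        ∫ ω, ‖X ω - ∑ s ∈ Finset.range k, (inner ℝ (X ω) (ζ s) : ℝ) • (ζ s : H)‖ ^ 2 ∂P) :=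
  stmt16_general P X hmeas hint ζ lam hanti hcov
end
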